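/- arXiv:1909.01445 — 7 statements merged into one kernel-verified Lean document; each statement's English description precedes it below -/
import Mathlib

section
/- Under the hypotheses of the projection lemma for both players (maps ρ^i : H̃1 × H̃2 → H^i with J(χ̃1, χ̃2) = J(ρ1(χ̃1,χ̃2), ρ2(χ̃1,χ̃2)) for all expanded strategies, and ρ^i restricting to the identity on H^i in its own coordinate), the values satisfy: sup_{χ2∈H2} inf_{χ1∈H1} J ≤ sup_{χ̃2∈H̃2} inf_{χ̃1∈H̃1} J ≤ inf_{χ̃1∈H̃1} sup_{χ̃2∈H̃2} J ≤ inf_{χ1∈H1} sup_{χ2∈H2} J. -/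
/-- Theorem 1 of the paper (values of original and expanded games): with
payoff-preserving projections `ρ1, ρ2` from expanded strategy profiles into the
smaller strategy sets `H1, H2` (restricting to the identity on the corresponding
coordinate), the chain
`sup_{H2} inf_{H1} J ≤ sup inf J ≤ inf sup J ≤ inf_{H1} sup_{H2} J` holds. -/
theorem stmt_3 {T1 T2 : Type*} [Nonempty T1] [Nonempty T2]
    (H1 : Set T1) (H2 : Set T2) (h1 : H1.Nonempty) (h2 : H2.Nonempty)
    (J : T1 → T2 → ℝ) (M : ℝ) (hJ : ∀ a b, |J a b| ≤ M)
    (ρ1 : T1 → T2 → T1) (ρ2 : T1 → T2 → T2)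
    (hmem1 : ∀ a b, ρ1 a b ∈ H1) (hmem2 : ∀ a b, ρ2 a b ∈ H2)
    (hpres : ∀ a b, J a b = J (ρ1 a b) (ρ2 a b))
    (hid1 : ∀ a ∈ H1, ∀ b, ρ1 a b = a)
    (hid2 : ∀ a, ∀ b ∈ H2, ρ2 a b = b) :
    (⨆ b : H2, ⨅ a : H1, J a b) ≤ (⨆ b : T2, ⨅ a : T1, J a b) ∧
      (⨆ b : T2, ⨅ a : T1, J a b) ≤ (⨅ a : T1, ⨆ b : T2, J a b) ∧
      (⨅ a : T1, ⨆ b : T2, J a b) ≤ (⨅ a : H1, ⨆ b : H2, J a b) := by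
  haveI : Nonempty H1 := h1.to_subtype
  haveI : Nonempty H2 := h2.to_subtype
  have hlb : ∀ a b, -M ≤ J a b := fun a b => (abs_le.mp (hJ a b)).1
  have hub : ∀ a b, J a b ≤ M := fun a b => (abs_le.mp (hJ a b)).2
  have bddb : ∀ b, BddBelow (Set.range fun a : T1 => J a b) := by
    intro b; exact ⟨-M, by rintro x ⟨a, rfl⟩; exact hlb a b⟩
  have bddbH : ∀ b, BddBelow (Set.range fun a : H1 => J a b) := by
    intro b; exact ⟨-M, by rintro x ⟨a, rfl⟩; exact hlb a b⟩
  have bdda : ∀ a, BddAbove (Set.range fun b : T2 => J a b) := by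
    intro a; exact ⟨M, by rintro x ⟨b, rfl⟩; exact hub a b⟩
  have bddaH : ∀ a, BddAbove (Set.range fun b : H2 => J a b) := by
    intro a; exact ⟨M, by rintro x ⟨b, rfl⟩; exact hub a b⟩
  have bddsup : BddAbove (Set.range fun b : T2 => ⨅ a : T1, J a b) := by
    refine ⟨M, ?_⟩
    rintro x ⟨b, rfl⟩
    exact le_trans (ciInf_le (bddb b) (Classical.arbitrary T1))
      (hub (Classical.arbitrary T1) b)
  have bddinf : BddBelow (Set.range fun a : T1 => ⨆ b : T2, J a b) := by
    refine ⟨-M, ?_⟩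
    rintro x ⟨a, rfl⟩
    exact le_trans (hlb a (Classical.arbitrary T2))
      (le_ciSup (bdda a) (Classical.arbitrary T2))
  refine ⟨?_, ?_, ?_⟩
  · apply ciSup_le
    rintro ⟨b, hb⟩
    refine le_trans ?_ (le_ciSup bddsup b)
    apply le_ciInf
    intro a
    have : J a b = J (ρ1 a b) b := by rw [hpres a b, hid2 a b hb]
    calc ⨅ a' : H1, J a' b ≤ J (ρ1 a b) b := ciInf_le (bddbH b) ⟨ρ1 a b, hmem1 a b⟩
    _ = J a b := this.symm
  · apply ciSup_le
    intro b
    apply le_ciInf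
    intro a
    exact le_trans (ciInf_le (bddb b) a) (le_ciSup (bdda a) b)
  · apply le_ciInf
    rintro ⟨a, ha⟩
    refine le_trans (ciInf_le bddinf a) ?_
    apply ciSup_le
    intro b
    have : J a b = J a (ρ2 a b) := by rw [hpres a b, hid1 a ha]
    calc J a b = J a (ρ2 a b) := this
    _ ≤ ⨆ b' : H2, J a b' := le_ciSup (bddaH a) ⟨ρ2 a b, hmem2 a b⟩
end

section
/- Let V : S̄' → ℝ be continuous with V(απ) = αV(π) for α ∈ [0,1], and define V'(π, γ1, γ2) = Σ_{z} P^m(π, γ1, γ2)(z) · V(F(π, γ1, γ2, z)) where F(π,γ1,γ2,z) is the Bayes posterior P^j(π,γ1,γ2)(z,·)/P^m(π,γ1,γ2)(z) when P^m > 0 (arbitrary sub-probability when P^m = 0), P^j is trilinear in (π, γ1, γ2) and P^m its z-marginal. Then V'(π,γ1,γ2) = Σ_z V(P^j(π,γ1,γ2)(z,·)), and the family {V'(·, γ1, γ2) : γ1 ∈ B1, γ2 ∈ B2} is equicontinuous in π. -/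
/-- The set of sub-probability vectors over a finite set. -/
def subProbSet (S : Type*) [Fintype S] : Set (S → ℝ) :=
  {p | (∀ s, 0 ≤ p s) ∧ ∑ s, p s ≤ 1}

/-- The probability simplex over a finite set. -/
def probSet (S : Type*) [Fintype S] : Set (S → ℝ) :=
  {p | (∀ s, 0 ≤ p s) ∧ ∑ s, p s = 1}

/-- The (unnormalized) joint measure `P^j(π,γ1,γ2)(z,x')`. -/
def Pj {X P1 P2 U1 U2 Z X' : Type*}
    [Fintype X] [Fintype P1] [Fintype P2] [Fintype U1] [Fintype U2]
    (K : Z → X' → X → P1 → P2 → U1 → U2 → ℝ)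
    (π : X × P1 × P2 → ℝ) (γ1 : P1 → U1 → ℝ) (γ2 : P2 → U2 → ℝ)
    (z : Z) (x' : X') : ℝ :=
  ∑ x, ∑ p1, ∑ p2, ∑ u1, ∑ u2,
    π (x, p1, p2) * γ1 p1 u1 * γ2 p2 u2 * K z x' x p1 p2 u1 u2

/-- The marginal `P^m(π,γ1,γ2)(z) = Σ_{x'} P^j(π,γ1,γ2)(z,x')`. -/
def Pm {X P1 P2 U1 U2 Z X' : Type*}
    [Fintype X] [Fintype P1] [Fintype P2] [Fintype U1] [Fintype U2] [Fintype X']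
    (K : Z → X' → X → P1 → P2 → U1 → U2 → ℝ)
    (π : X × P1 × P2 → ℝ) (γ1 : P1 → U1 → ℝ) (γ2 : P2 → U2 → ℝ) (z : Z) : ℝ :=
  ∑ x', Pj K π γ1 γ2 z x'

open Topology Filter

set_option linter.unusedSectionVars false

section Aux
variable {X P1 P2 U1 U2 Z X' : Type*}
  [Fintype X] [Fintype P1] [Fintype P2] [Fintype U1] [Fintype U2] [Fintype Z] [Fintype X']
  (K : Z → X' → X → P1 → P2 → U1 → U2 → ℝ)

lemma aux_Pj_nonneg (hK : ∀ z x' x p1 p2 u1 u2, K z x' x p1 p2 u1 u2 ∈ Set.Icc (0:ℝ) 1)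
    {π : X × P1 × P2 → ℝ} (hπ : ∀ s, 0 ≤ π s)
    {γ1 : P1 → U1 → ℝ} (h1 : ∀ p u, 0 ≤ γ1 p u)
    {γ2 : P2 → U2 → ℝ} (h2 : ∀ p u, 0 ≤ γ2 p u) (z : Z) (x' : X') :
    0 ≤ Pj K π γ1 γ2 z x' := by
  refine Finset.sum_nonneg fun x _ => Finset.sum_nonneg fun p1 _ => Finset.sum_nonneg fun p2 _ =>
    Finset.sum_nonneg fun u1 _ => Finset.sum_nonneg fun u2 _ => ?_
  exact mul_nonneg (mul_nonneg (mul_nonneg (hπ _) (h1 _ _)) (h2 _ _)) (hK z x' x p1 p2 u1 u2).1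

lemma aux_Pm_eq (π : X × P1 × P2 → ℝ) (γ1 : P1 → U1 → ℝ) (γ2 : P2 → U2 → ℝ) (z : Z) :
    Pm K π γ1 γ2 z = ∑ x, ∑ p1, ∑ p2, ∑ u1, ∑ u2,
      π (x, p1, p2) * γ1 p1 u1 * γ2 p2 u2 * (∑ x', K z x' x p1 p2 u1 u2) := by
  unfold Pm Pj
  rw [Finset.sum_comm]
  refine Finset.sum_congr rfl fun x _ => ?_
  rw [Finset.sum_comm]
  refine Finset.sum_congr rfl fun p1 _ => ?_
  rw [Finset.sum_comm]
  refine Finset.sum_congr rfl fun p2 _ => ?_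
  rw [Finset.sum_comm]
  refine Finset.sum_congr rfl fun u1 _ => ?_
  rw [Finset.sum_comm]
  refine Finset.sum_congr rfl fun u2 _ => ?_
  exact (Finset.mul_sum _ _ _).symm

lemma aux_Pm_nonneg (hK : ∀ z x' x p1 p2 u1 u2, K z x' x p1 p2 u1 u2 ∈ Set.Icc (0:ℝ) 1)
    {π : X × P1 × P2 → ℝ} (hπ : ∀ s, 0 ≤ π s)
    {γ1 : P1 → U1 → ℝ} (h1 : ∀ p u, 0 ≤ γ1 p u)
    {γ2 : P2 → U2 → ℝ} (h2 : ∀ p u, 0 ≤ γ2 p u) (z : Z) :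
    0 ≤ Pm K π γ1 γ2 z :=
  Finset.sum_nonneg fun x' _ => aux_Pj_nonneg K hK hπ h1 h2 z x'

lemma aux_Pm_le_one (hK : ∀ z x' x p1 p2 u1 u2, K z x' x p1 p2 u1 u2 ∈ Set.Icc (0:ℝ) 1)
    (hKsum : ∀ x p1 p2 u1 u2, ∑ z, ∑ x', K z x' x p1 p2 u1 u2 = 1)
    {π : X × P1 × P2 → ℝ} (hπ : π ∈ subProbSet (X × P1 × P2))
    {γ1 : P1 → U1 → ℝ} (h1 : ∀ p, γ1 p ∈ probSet U1)
    {γ2 : P2 → U2 → ℝ} (h2 : ∀ p, γ2 p ∈ probSet U2) (z : Z) :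
    Pm K π γ1 γ2 z ≤ 1 := by
  have hKz : ∀ x p1 p2 u1 u2, ∑ x', K z x' x p1 p2 u1 u2 ≤ 1 := by
    intro x p1 p2 u1 u2
    calc ∑ x', K z x' x p1 p2 u1 u2
        ≤ ∑ z', ∑ x', K z' x' x p1 p2 u1 u2 :=
          Finset.single_le_sum
            (fun z' _ => Finset.sum_nonneg fun x' _ => (hK z' x' x p1 p2 u1 u2).1)
            (Finset.mem_univ z)
      _ = 1 := hKsum x p1 p2 u1 u2
  rw [aux_Pm_eq]
  have step1 : ∑ x, ∑ p1, ∑ p2, ∑ u1, ∑ u2,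
      π (x, p1, p2) * γ1 p1 u1 * γ2 p2 u2 * (∑ x', K z x' x p1 p2 u1 u2)
      ≤ ∑ x, ∑ p1, ∑ p2, ∑ u1, ∑ u2, π (x, p1, p2) * γ1 p1 u1 * γ2 p2 u2 := by
    refine Finset.sum_le_sum fun x _ => Finset.sum_le_sum fun p1 _ =>
      Finset.sum_le_sum fun p2 _ => Finset.sum_le_sum fun u1 _ =>
      Finset.sum_le_sum fun u2 _ => ?_
    exact mul_le_of_le_one_right
      (mul_nonneg (mul_nonneg (hπ.1 _) ((h1 p1).1 u1)) ((h2 p2).1 u2)) (hKz x p1 p2 u1 u2)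
  have step2 : ∑ x, ∑ p1, ∑ p2, ∑ u1, ∑ u2,
      π (x, p1, p2) * γ1 p1 u1 * γ2 p2 u2 = ∑ s, π s := by
    rw [Fintype.sum_prod_type]
    refine Finset.sum_congr rfl fun x _ => ?_
    rw [Fintype.sum_prod_type]
    refine Finset.sum_congr rfl fun p1 _ => ?_
    refine Finset.sum_congr rfl fun p2 _ => ?_
    calc ∑ u1, ∑ u2, π (x, p1, p2) * γ1 p1 u1 * γ2 p2 u2
        = ∑ u1, π (x, p1, p2) * γ1 p1 u1 * ∑ u2, γ2 p2 u2 := by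
          refine Finset.sum_congr rfl fun u1 _ => (Finset.mul_sum _ _ _).symm
      _ = π (x, p1, p2) := by rw [(h2 p2).2]; simp only [mul_one]; rw [← Finset.mul_sum, (h1 p1).2, mul_one]
  exact (step1.trans_eq step2).trans hπ.2

lemma aux_Pj_mem (hK : ∀ z x' x p1 p2 u1 u2, K z x' x p1 p2 u1 u2 ∈ Set.Icc (0:ℝ) 1)
    (hKsum : ∀ x p1 p2 u1 u2, ∑ z, ∑ x', K z x' x p1 p2 u1 u2 = 1)
    {π : X × P1 × P2 → ℝ} (hπ : π ∈ subProbSet (X × P1 × P2))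
    {γ1 : P1 → U1 → ℝ} (h1 : ∀ p, γ1 p ∈ probSet U1)
    {γ2 : P2 → U2 → ℝ} (h2 : ∀ p, γ2 p ∈ probSet U2) (z : Z) :
    (fun x' => Pj K π γ1 γ2 z x') ∈ subProbSet X' :=
  ⟨fun x' => aux_Pj_nonneg K hK hπ.1 (fun p u => (h1 p).1 u) (fun p u => (h2 p).1 u) z x',
   aux_Pm_le_one K hK hKsum hπ h1 h2 z⟩

lemma aux_pointwise (hK : ∀ z x' x p1 p2 u1 u2, K z x' x p1 p2 u1 u2 ∈ Set.Icc (0:ℝ) 1)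
    (hKsum : ∀ x p1 p2 u1 u2, ∑ z, ∑ x', K z x' x p1 p2 u1 u2 = 1)
    (V : (X' → ℝ) → ℝ)
    (hVhom : ∀ α ∈ Set.Icc (0:ℝ) 1, ∀ μ ∈ subProbSet X', V (α • μ) = α * V μ)
    (F : (X × P1 × P2 → ℝ) → (P1 → U1 → ℝ) → (P2 → U2 → ℝ) → Z → (X' → ℝ))
    (hFsub : ∀ π γ1 γ2 z, F π γ1 γ2 z ∈ subProbSet X')
    (hFbayes : ∀ π γ1 γ2 z, 0 < Pm K π γ1 γ2 z →
      F π γ1 γ2 z = (Pm K π γ1 γ2 z)⁻¹ • fun x' => Pj K π γ1 γ2 z x')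
    {π : X × P1 × P2 → ℝ} (hπ : π ∈ subProbSet (X × P1 × P2))
    {γ1 : P1 → U1 → ℝ} (h1 : ∀ p, γ1 p ∈ probSet U1)
    {γ2 : P2 → U2 → ℝ} (h2 : ∀ p, γ2 p ∈ probSet U2) (z : Z) :
    Pm K π γ1 γ2 z * V (F π γ1 γ2 z) = V (fun x' => Pj K π γ1 γ2 z x') := by
  have hPmmem : Pm K π γ1 γ2 z ∈ Set.Icc (0:ℝ) 1 :=
    ⟨aux_Pm_nonneg K hK hπ.1 (fun p u => (h1 p).1 u) (fun p u => (h2 p).1 u) z,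
     aux_Pm_le_one K hK hKsum hπ h1 h2 z⟩
  rcases lt_or_eq_of_le hPmmem.1 with hpos | hzero
  · have hsmul : Pm K π γ1 γ2 z • F π γ1 γ2 z = fun x' => Pj K π γ1 γ2 z x' := by
      rw [hFbayes π γ1 γ2 z hpos, smul_smul, mul_inv_cancel₀ hpos.ne', one_smul]
    rw [← hsmul, hVhom _ hPmmem _ (hFsub π γ1 γ2 z)]
  · have hPj0 : ∀ x', Pj K π γ1 γ2 z x' = 0 := by
      intro x'
      have := (Finset.sum_eq_zero_iff_of_nonneg (fun x' _ =>
        aux_Pj_nonneg K hK hπ.1 (fun p u => (h1 p).1 u) (fun p u => (h2 p).1 u) z x')).mp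
        hzero.symm
      exact this x' (Finset.mem_univ x')
    have h0 : (fun x' => Pj K π γ1 γ2 z x') = (0:ℝ) • F π γ1 γ2 z := by
      funext x'; simp [hPj0 x']
    rw [h0, hVhom 0 ⟨le_refl 0, zero_le_one⟩ _ (hFsub π γ1 γ2 z), ← hzero]

lemma aux_Pj_lip (hK : ∀ z x' x p1 p2 u1 u2, K z x' x p1 p2 u1 u2 ∈ Set.Icc (0:ℝ) 1)
    {γ1 : P1 → U1 → ℝ} (h1 : ∀ p, γ1 p ∈ probSet U1)
    {γ2 : P2 → U2 → ℝ} (h2 : ∀ p, γ2 p ∈ probSet U2)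
    (π π' : X × P1 × P2 → ℝ) (z : Z) (x' : X') :
    |Pj K π γ1 γ2 z x' - Pj K π' γ1 γ2 z x'| ≤
      (Fintype.card X * Fintype.card P1 * Fintype.card P2 : ℝ) * dist π π' := by
  have hd : ∀ s, |π s - π' s| ≤ dist π π' := fun s => by
    rw [← Real.dist_eq]; exact dist_le_pi_dist π π' s
  have expand : Pj K π γ1 γ2 z x' - Pj K π' γ1 γ2 z x' =
      ∑ x, ∑ p1, ∑ p2, ∑ u1, ∑ u2,
        (π (x, p1, p2) - π' (x, p1, p2)) * γ1 p1 u1 * γ2 p2 u2 * K z x' x p1 p2 u1 u2 := by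
    unfold Pj
    simp only [← Finset.sum_sub_distrib, ← sub_mul]
  rw [expand]
  have hterm : ∀ x p1 p2 u1 u2,
      |(π (x, p1, p2) - π' (x, p1, p2)) * γ1 p1 u1 * γ2 p2 u2 * K z x' x p1 p2 u1 u2| ≤
        dist π π' * (γ1 p1 u1 * γ2 p2 u2) := by
    intro x p1 p2 u1 u2
    rw [abs_mul, abs_mul, abs_mul, abs_of_nonneg ((h1 p1).1 u1), abs_of_nonneg ((h2 p2).1 u2),
      abs_of_nonneg (hK z x' x p1 p2 u1 u2).1]
    calc |π (x, p1, p2) - π' (x, p1, p2)| * γ1 p1 u1 * γ2 p2 u2 * K z x' x p1 p2 u1 u2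
        ≤ dist π π' * γ1 p1 u1 * γ2 p2 u2 * 1 := by
          gcongr <;> first
            | exact (hK z x' x p1 p2 u1 u2).1
            | exact (hK z x' x p1 p2 u1 u2).2
            | exact hd _
            | exact (h1 p1).1 u1
            | exact (h2 p2).1 u2
            | exact mul_nonneg (mul_nonneg dist_nonneg ((h1 p1).1 u1)) ((h2 p2).1 u2)
      _ = dist π π' * (γ1 p1 u1 * γ2 p2 u2) := by ring
  calc |∑ x, ∑ p1, ∑ p2, ∑ u1, ∑ u2,
        (π (x, p1, p2) - π' (x, p1, p2)) * γ1 p1 u1 * γ2 p2 u2 * K z x' x p1 p2 u1 u2|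
      ≤ ∑ x, ∑ p1, ∑ p2, ∑ u1, ∑ u2, dist π π' * (γ1 p1 u1 * γ2 p2 u2) := by
        refine (Finset.abs_sum_le_sum_abs _ _).trans (Finset.sum_le_sum fun x _ => ?_)
        refine (Finset.abs_sum_le_sum_abs _ _).trans (Finset.sum_le_sum fun p1 _ => ?_)
        refine (Finset.abs_sum_le_sum_abs _ _).trans (Finset.sum_le_sum fun p2 _ => ?_)
        refine (Finset.abs_sum_le_sum_abs _ _).trans (Finset.sum_le_sum fun u1 _ => ?_)
        exact (Finset.abs_sum_le_sum_abs _ _).trans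
          (Finset.sum_le_sum fun u2 _ => hterm x p1 p2 u1 u2)
    _ = (Fintype.card X * Fintype.card P1 * Fintype.card P2 : ℝ) * dist π π' := by
        have hin : ∀ (p1 : P1) (p2 : P2),
            ∑ u1, ∑ u2, dist π π' * (γ1 p1 u1 * γ2 p2 u2) = dist π π' := by
          intro p1 p2
          have : ∀ u1, ∑ u2, dist π π' * (γ1 p1 u1 * γ2 p2 u2)
              = dist π π' * γ1 p1 u1 := by
            intro u1
            rw [← Finset.mul_sum, ← Finset.mul_sum, (h2 p2).2, mul_one]
          simp only [this]
          rw [← Finset.mul_sum, (h1 p1).2, mul_one]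
        simp only [hin, Finset.sum_const, Finset.card_univ, nsmul_eq_mul]
        ring

lemma aux_compact : IsCompact (subProbSet X') := by
  have hclosed : IsClosed (subProbSet X') := by
    have : subProbSet X' = (⋂ s, {p : X' → ℝ | 0 ≤ p s}) ∩ {p | ∑ s, p s ≤ 1} := by
      ext p; simp [subProbSet, Set.mem_iInter]
    rw [this]
    exact (isClosed_iInter fun s => isClosed_le continuous_const (continuous_apply s)).inter
      (isClosed_le (continuous_finset_sum _ fun s _ => continuous_apply s) continuous_const)
  have hsub : subProbSet X' ⊆ Set.pi Set.univ fun _ : X' => Set.Icc (0:ℝ) 1 := by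
    rintro p ⟨h0, hs⟩ s _
    exact ⟨h0 s, le_trans (Finset.single_le_sum (fun t _ => h0 t) (Finset.mem_univ s)) hs⟩
  exact (isCompact_univ_pi fun _ => isCompact_Icc).of_isClosed_subset hclosed hsub

end Aux

/-- Let `V` be continuous on the set of sub-probability vectors over `X'` and
homogeneous (`V(αμ) = αV(μ)` for `α ∈ [0,1]`), and let
`V'(π,γ1,γ2) = Σ_z P^m(π,γ1,γ2)(z) V(F(π,γ1,γ2,z))` with `F` the Bayes posterior
when `P^m > 0` and an arbitrary sub-probability otherwise. Then
`V'(π,γ1,γ2) = Σ_z V(P^j(π,γ1,γ2)(z,·))`, and the family `{V'(·,γ1,γ2)}`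
over stochastic prescriptions is equicontinuous on the sub-probability set. -/
theorem stmt_8 {X P1 P2 U1 U2 Z X' : Type*}
    [Fintype X] [Fintype P1] [Fintype P2] [Fintype U1] [Fintype U2]
    [Fintype Z] [Fintype X']
    (K : Z → X' → X → P1 → P2 → U1 → U2 → ℝ)
    (hK : ∀ z x' x p1 p2 u1 u2, K z x' x p1 p2 u1 u2 ∈ Set.Icc (0:ℝ) 1)
    (hKsum : ∀ x p1 p2 u1 u2, ∑ z, ∑ x', K z x' x p1 p2 u1 u2 = 1)
    (V : (X' → ℝ) → ℝ)
    (hVcont : ContinuousOn V (subProbSet X'))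
    (hVhom : ∀ α ∈ Set.Icc (0:ℝ) 1, ∀ μ ∈ subProbSet X', V (α • μ) = α * V μ)
    (F : (X × P1 × P2 → ℝ) → (P1 → U1 → ℝ) → (P2 → U2 → ℝ) → Z → (X' → ℝ))
    (hFsub : ∀ π γ1 γ2 z, F π γ1 γ2 z ∈ subProbSet X')
    (hFbayes : ∀ π γ1 γ2 z, 0 < Pm K π γ1 γ2 z →
      F π γ1 γ2 z = (Pm K π γ1 γ2 z)⁻¹ • fun x' => Pj K π γ1 γ2 z x') :
    (∀ π ∈ subProbSet (X × P1 × P2),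
      ∀ γ1, (∀ p, γ1 p ∈ probSet U1) →
      ∀ γ2, (∀ p, γ2 p ∈ probSet U2) →
        ∑ z, Pm K π γ1 γ2 z * V (F π γ1 γ2 z) =
          ∑ z, V (fun x' => Pj K π γ1 γ2 z x')) ∧
    EquicontinuousOn
      (fun (g : {γ1 : P1 → U1 → ℝ // ∀ p, γ1 p ∈ probSet U1} ×
                {γ2 : P2 → U2 → ℝ // ∀ p, γ2 p ∈ probSet U2})
           (π : X × P1 × P2 → ℝ) =>
        ∑ z, Pm K π g.1.1 g.2.1 z * V (F π g.1.1 g.2.1 z))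
      (subProbSet (X × P1 × P2)) := by
  have part1 : ∀ π ∈ subProbSet (X × P1 × P2),
      ∀ γ1, (∀ p, γ1 p ∈ probSet U1) →
      ∀ γ2, (∀ p, γ2 p ∈ probSet U2) →
        ∑ z, Pm K π γ1 γ2 z * V (F π γ1 γ2 z) =
          ∑ z, V (fun x' => Pj K π γ1 γ2 z x') := by
    intro π hπ γ1 h1 γ2 h2
    exact Finset.sum_congr rfl fun z _ =>
      aux_pointwise K hK hKsum V hVhom F hFsub hFbayes hπ h1 h2 z
  refine ⟨part1, ?_⟩
  have hUC := (aux_compact (X' := X')).uniformContinuousOn_of_continuous hVcont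
  intro π₀ hπ₀ U hU
  obtain ⟨ε, hε, hεU⟩ := Metric.mem_uniformity_dist.mp hU
  set n : ℝ := (Fintype.card Z : ℝ) with hn
  have hn0 : 0 ≤ n := Nat.cast_nonneg _
  set ε' : ℝ := ε / (n + 1) with hε'def
  have hε' : 0 < ε' := by positivity
  obtain ⟨δ', hδ', hδ'V⟩ := Metric.uniformContinuousOn_iff.mp hUC ε' hε'
  set C : ℝ := (Fintype.card X * Fintype.card P1 * Fintype.card P2 : ℝ) with hC
  have hC0 : 0 ≤ C := by positivity
  set δ : ℝ := δ' / (C + 1) with hδdef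
  have hδ : 0 < δ := by positivity
  have hball : subProbSet (X × P1 × P2) ∩ Metric.ball π₀ δ ∈
      𝓝[subProbSet (X × P1 × P2)] π₀ :=
    inter_mem_nhdsWithin _ (Metric.ball_mem_nhds _ hδ)
  filter_upwards [hball] with π hπ
  rintro ⟨⟨γ1, h1⟩, ⟨γ2, h2⟩⟩
  apply hεU
  show dist (∑ z, Pm K π₀ γ1 γ2 z * V (F π₀ γ1 γ2 z))
      (∑ z, Pm K π γ1 γ2 z * V (F π γ1 γ2 z)) < ε
  rw [part1 π₀ hπ₀ γ1 h1 γ2 h2, part1 π hπ.1 γ1 h1 γ2 h2]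
  have hdπ : dist π₀ π < δ := by rw [dist_comm]; exact Metric.mem_ball.mp hπ.2
  have hC1 : (0:ℝ) < C + 1 := by positivity
  have hCδ : C * δ < δ' := by
    rw [hδdef, mul_comm, div_mul_eq_mul_div, div_lt_iff₀ hC1]
    nlinarith [hδ']
  have hz : ∀ z, dist (V (fun x' => Pj K π₀ γ1 γ2 z x'))
      (V (fun x' => Pj K π γ1 γ2 z x')) < ε' := by
    intro z
    refine hδ'V _ (aux_Pj_mem K hK hKsum hπ₀ h1 h2 z) _ (aux_Pj_mem K hK hKsum hπ.1 h1 h2 z) ?_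
    have hle : dist (fun x' => Pj K π₀ γ1 γ2 z x') (fun x' => Pj K π γ1 γ2 z x')
        ≤ C * dist π₀ π := by
      rw [dist_pi_le_iff (by positivity)]
      intro x'
      rw [Real.dist_eq]
      exact aux_Pj_lip K hK h1 h2 π₀ π z x'
    calc dist (fun x' => Pj K π₀ γ1 γ2 z x') (fun x' => Pj K π γ1 γ2 z x')
        ≤ C * dist π₀ π := hle
      _ ≤ C * δ := mul_le_mul_of_nonneg_left hdπ.le hC0
      _ < δ' := hCδ
  calc dist (∑ z, V (fun x' => Pj K π₀ γ1 γ2 z x')) (∑ z, V (fun x' => Pj K π γ1 γ2 z x'))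
      ≤ ∑ z, dist (V (fun x' => Pj K π₀ γ1 γ2 z x')) (V (fun x' => Pj K π γ1 γ2 z x')) :=
        dist_sum_sum_le _ _ _
    _ ≤ ∑ _z : Z, ε' := Finset.sum_le_sum fun z _ => (hz z).le
    _ = n * ε' := by rw [Finset.sum_const, Finset.card_univ, nsmul_eq_mul, hn]
    _ < ε := by
        rw [hε'def, mul_comm, div_mul_eq_mul_div, div_lt_iff₀ (by positivity : (0:ℝ) < n + 1)]
        nlinarith [hε]
end

section
/- Define backward-inductively V^u_{T+1} ≡ 0 and, for t ≤ T, w^u_t(π, γ1, γ2) = c̃_t(π, γ1, γ2) + Σ_z P^m_t(π, γ1, γ2)(z) V^u_{t+1}(F_t(π, γ1, γ2, z)) and V^u_t(π) = inf_{γ1} sup_{γ2} w^u_t(π, γ1, γ2), where c̃_t is trilinear in (π, γ1, γ2), P^m_t is trilinear, F_t is the Bayes update, and the extensions to sub-probability vectors are defined homogeneously. Then for every t ≤ T+1, V^u_t is continuous on the set of sub-probability vectors and satisfies V^u_t(απ) = α V^u_t(π) for all α ∈ [0,1]. -/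
/-- The stochastic prescriptions from private information `P` to actions `U`. -/
def prescSet (P U : Type*) [Fintype U] : Set (P → U → ℝ) :=
  {γ | ∀ p, (∀ u, 0 ≤ γ p u) ∧ ∑ u, γ p u = 1}

/-- Expected stage cost `c̃(π,γ1,γ2)` (trilinear in `(π,γ1,γ2)`). -/
def stageCost {S P1 P2 U1 U2 : Type*} [Fintype S] [Fintype U1] [Fintype U2]
    (proj1 : S → P1) (proj2 : S → P2) (c : S → U1 → U2 → ℝ)
    (π : S → ℝ) (γ1 : P1 → U1 → ℝ) (γ2 : P2 → U2 → ℝ) : ℝ :=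
  ∑ s, ∑ u1, ∑ u2, π s * γ1 (proj1 s) u1 * γ2 (proj2 s) u2 * c s u1 u2

/-- Unnormalized joint measure on `(z, s')` (trilinear in `(π,γ1,γ2)`). -/
def PjD {S S' P1 P2 U1 U2 Z : Type*} [Fintype S] [Fintype U1] [Fintype U2]
    (proj1 : S → P1) (proj2 : S → P2) (K : S → U1 → U2 → Z → S' → ℝ)
    (π : S → ℝ) (γ1 : P1 → U1 → ℝ) (γ2 : P2 → U2 → ℝ) (z : Z) (s' : S') : ℝ :=
  ∑ s, ∑ u1, ∑ u2, π s * γ1 (proj1 s) u1 * γ2 (proj2 s) u2 * K s u1 u2 z s'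

/-- Marginal `P^m` of `P^j` on `z`. -/
def PmD {S S' P1 P2 U1 U2 Z : Type*} [Fintype S] [Fintype S'] [Fintype U1]
    [Fintype U2]
    (proj1 : S → P1) (proj2 : S → P2) (K : S → U1 → U2 → Z → S' → ℝ)
    (π : S → ℝ) (γ1 : P1 → U1 → ℝ) (γ2 : P2 → U2 → ℝ) (z : Z) : ℝ :=
  ∑ s', PjD proj1 proj2 K π γ1 γ2 z s'

open Set

instance compactSpace_prescSet (P U : Type*) [Fintype U] : CompactSpace (prescSet P U) := by
  have hpi : prescSet P U = Set.pi univ fun _ => stdSimplex ℝ U := by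
    ext γ
    simp [prescSet, stdSimplex, Set.pi, forall_and]
  exact isCompact_iff_compactSpace.mp (hpi ▸ isCompact_univ_pi fun _ => isCompact_stdSimplex ℝ U)

lemma ContinuousOn.iInf_iSup {X A B α : Type*} [TopologicalSpace X] [TopologicalSpace A]
    [TopologicalSpace B] [CompactSpace A] [CompactSpace B]
    [ConditionallyCompleteLinearOrder α] [TopologicalSpace α] [OrderTopology α]
    {f : X → A → B → α} {s : Set X}
    (hf : ContinuousOn (fun q : X × A × B => f q.1 q.2.1 q.2.2) (s ×ˢ univ)) :
    ContinuousOn (fun x => ⨅ a, ⨆ b, f x a b) s := by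
  rw [continuousOn_iff_continuous_domRestrict]
  have hf' : Continuous fun q : (s × A) × B => f q.1.1 q.1.2 q.2 :=
    hf.comp_continuous (show Continuous fun q : (s × A) × B => ((q.1.1 : X), q.1.2, q.2) by
      fun_prop) fun q => ⟨q.1.1.2, trivial⟩
  have hsup : Continuous fun p : s × A => ⨆ b, f p.1 p.2 b := by
    have h := isCompact_univ.continuous_sSup (f := fun p : s × A => f p.1 p.2) hf'
    simp only [image_univ] at h
    exact h
  have h := isCompact_univ.continuous_sInf (f := fun (x : s) (a : A) => ⨆ b, f x a b) hsup
  simp only [image_univ] at h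
  exact h

section SubProb

variable {S : Type*} [Fintype S]

lemma zero_mem_subProbSet : (0 : S → ℝ) ∈ subProbSet S := by
  constructor <;> simp

lemma smul_mem_subProbSet {α : ℝ} (hα : α ∈ Icc (0 : ℝ) 1) {π : S → ℝ}
    (hπ : π ∈ subProbSet S) : α • π ∈ subProbSet S := by
  refine ⟨fun s => mul_nonneg hα.1 (hπ.1 s), ?_⟩
  simp only [Pi.smul_apply, smul_eq_mul, ← Finset.mul_sum]
  exact mul_le_one₀ hα.2 (Finset.sum_nonneg fun s _ => hπ.1 s) hπ.2

def HomogeneousOnSubProb (g : (S → ℝ) → ℝ) : Prop :=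
  ∀ α ∈ Icc (0 : ℝ) 1, ∀ π ∈ subProbSet S, g (α • π) = α * g π

lemma HomogeneousOnSubProb.map_zero {g : (S → ℝ) → ℝ} (hg : HomogeneousOnSubProb g) :
    g 0 = 0 := by
  simpa using hg 0 ⟨le_rfl, zero_le_one⟩ 0 zero_mem_subProbSet

/-- When the mass `∑ μ` vanishes, `ν` is arbitrary and both sides are `0`. -/
lemma HomogeneousOnSubProb.sum_mul_apply_of_normalize {g : (S → ℝ) → ℝ}
    (hg : HomogeneousOnSubProb g) {μ ν : S → ℝ} (hμ : μ ∈ subProbSet S)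
    (hν : ν ∈ subProbSet S) (hνμ : 0 < ∑ s, μ s → ν = (∑ s, μ s)⁻¹ • μ) :
    (∑ s, μ s) * g ν = g μ := by
  have hμ0 : ∀ s ∈ Finset.univ, 0 ≤ μ s := fun s _ => hμ.1 s
  rcases (Finset.sum_nonneg hμ0).eq_or_lt with hmass | hmass
  · have hzero : μ = 0 :=
      funext fun s => (Finset.sum_eq_zero_iff_of_nonneg hμ0).mp hmass.symm s (Finset.mem_univ s)
    rw [← hmass, zero_mul, hzero, hg.map_zero]
  · rw [← hg _ ⟨hmass.le, hμ.2⟩ ν hν, hνμ hmass, smul_smul, mul_inv_cancel₀ hmass.ne',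
      one_smul]

end SubProb

section Trilinear

variable {S S' P1 P2 U1 U2 Z : Type*} [Fintype S] [Fintype U1] [Fintype U2]
  (proj1 : S → P1) (proj2 : S → P2) {π : S → ℝ} {γ1 : P1 → U1 → ℝ} {γ2 : P2 → U2 → ℝ}

lemma mul_presc_nonneg (hπ : π ∈ subProbSet S) (hγ1 : γ1 ∈ prescSet P1 U1)
    (hγ2 : γ2 ∈ prescSet P2 U2) (s : S) (u1 : U1) (u2 : U2) :
    0 ≤ π s * γ1 (proj1 s) u1 * γ2 (proj2 s) u2 :=
  mul_nonneg (mul_nonneg (hπ.1 s) ((hγ1 _).1 u1)) ((hγ2 _).1 u2)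

lemma sum_mul_presc (hγ1 : γ1 ∈ prescSet P1 U1) (hγ2 : γ2 ∈ prescSet P2 U2) :
    ∑ s, ∑ u1, ∑ u2, π s * γ1 (proj1 s) u1 * γ2 (proj2 s) u2 = ∑ s, π s := by
  refine Finset.sum_congr rfl fun s _ => ?_
  simp only [← Finset.mul_sum, (hγ2 _).2, mul_one, (hγ1 _).2]

lemma sum_PjD [Fintype S'] (K : S → U1 → U2 → Z → S' → ℝ) (z : Z) :
    ∑ s', PjD proj1 proj2 K π γ1 γ2 z s' =
      ∑ s, ∑ u1, ∑ u2, π s * γ1 (proj1 s) u1 * γ2 (proj2 s) u2 * ∑ s', K s u1 u2 z s' := by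
  simp only [PjD, Finset.mul_sum]
  rw [Finset.sum_comm]; congr! 2 with s
  rw [Finset.sum_comm]; congr! 2 with u1
  rw [Finset.sum_comm]

lemma PjD_mem_subProbSet [Fintype S'] [Fintype Z] {K : S → U1 → U2 → Z → S' → ℝ}
    (hK : ∀ s u1 u2 z s', 0 ≤ K s u1 u2 z s')
    (hKsum : ∀ s u1 u2, ∑ z, ∑ s', K s u1 u2 z s' = 1)
    (hπ : π ∈ subProbSet S) (hγ1 : γ1 ∈ prescSet P1 U1) (hγ2 : γ2 ∈ prescSet P2 U2) (z : Z) :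
    (fun s' => PjD proj1 proj2 K π γ1 γ2 z s') ∈ subProbSet S' := by
  have hw := mul_presc_nonneg proj1 proj2 hπ hγ1 hγ2
  refine ⟨fun s' => Finset.sum_nonneg fun s _ => Finset.sum_nonneg fun u1 _ =>
    Finset.sum_nonneg fun u2 _ => mul_nonneg (hw s u1 u2) (hK s u1 u2 z s'), ?_⟩
  have hKz : ∀ s u1 u2, ∑ s', K s u1 u2 z s' ≤ 1 := fun s u1 u2 =>
    hKsum s u1 u2 ▸ Finset.single_le_sum (fun z' _ => Finset.sum_nonneg fun s' _ =>
      hK s u1 u2 z' s') (Finset.mem_univ z)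
  calc ∑ s', PjD proj1 proj2 K π γ1 γ2 z s'
      ≤ ∑ s, ∑ u1, ∑ u2, π s * γ1 (proj1 s) u1 * γ2 (proj2 s) u2 := by
        rw [sum_PjD]
        exact Finset.sum_le_sum fun s _ => Finset.sum_le_sum fun u1 _ => Finset.sum_le_sum
          fun u2 _ => mul_le_of_le_one_right (hw s u1 u2) (hKz s u1 u2)
    _ = ∑ s, π s := sum_mul_presc proj1 proj2 hγ1 hγ2
    _ ≤ 1 := hπ.2

lemma stageCost_smul (c : S → U1 → U2 → ℝ) (α : ℝ) :
    stageCost proj1 proj2 c (α • π) γ1 γ2 = α * stageCost proj1 proj2 c π γ1 γ2 := by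
  simp only [stageCost, Finset.mul_sum, Pi.smul_apply, smul_eq_mul, mul_assoc]

lemma PjD_smul (K : S → U1 → U2 → Z → S' → ℝ) (α : ℝ) (z : Z) :
    (fun s' => PjD proj1 proj2 K (α • π) γ1 γ2 z s') =
      α • fun s' => PjD proj1 proj2 K π γ1 γ2 z s' := by
  funext s'
  simp only [PjD, Finset.mul_sum, Pi.smul_apply, smul_eq_mul, mul_assoc]

lemma continuous_stageCost (c : S → U1 → U2 → ℝ) :
    Continuous fun q : (S → ℝ) × (P1 → U1 → ℝ) × (P2 → U2 → ℝ) =>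
      stageCost proj1 proj2 c q.1 q.2.1 q.2.2 := by
  unfold stageCost
  fun_prop

lemma continuous_PjD (K : S → U1 → U2 → Z → S' → ℝ) (z : Z) :
    Continuous fun q : (S → ℝ) × (P1 → U1 → ℝ) × (P2 → U2 → ℝ) =>
      fun s' => PjD proj1 proj2 K q.1 q.2.1 q.2.2 z s' := by
  unfold PjD
  fun_prop

end Trilinear

section Stage

variable {S S' P1 P2 U1 U2 Z : Type*} [Fintype S] [Fintype S'] [Fintype U1] [Fintype U2]
  [Fintype Z] (proj1 : S → P1) (proj2 : S → P2) (c : S → U1 → U2 → ℝ)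
  (K : S → U1 → U2 → Z → S' → ℝ)

/-- The Bellman payoff with `P^m(z) V'(F(z))` replaced by `V'(P^j(z, ·))`. -/
def reducedPayoff (V' : (S' → ℝ) → ℝ) (π : S → ℝ) (γ1 : P1 → U1 → ℝ) (γ2 : P2 → U2 → ℝ) :
    ℝ :=
  stageCost proj1 proj2 c π γ1 γ2 + ∑ z, V' fun s' => PjD proj1 proj2 K π γ1 γ2 z s'

noncomputable def upperValue (V' : (S' → ℝ) → ℝ) (π : S → ℝ) : ℝ :=
  ⨅ γ1 : prescSet P1 U1, ⨆ γ2 : prescSet P2 U2, reducedPayoff proj1 proj2 c K V' π γ1 γ2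

variable {proj1 proj2 c K}

lemma sum_PmD_mul_eq_sum_apply_PjD {V' : (S' → ℝ) → ℝ} (hV' : HomogeneousOnSubProb V')
    (hK : ∀ s u1 u2 z s', 0 ≤ K s u1 u2 z s')
    (hKsum : ∀ s u1 u2, ∑ z, ∑ s', K s u1 u2 z s' = 1)
    (F : (S → ℝ) → (P1 → U1 → ℝ) → (P2 → U2 → ℝ) → Z → (S' → ℝ))
    (hFsub : ∀ π γ1 γ2 z, F π γ1 γ2 z ∈ subProbSet S')
    (hFbayes : ∀ π γ1 γ2 z, 0 < PmD proj1 proj2 K π γ1 γ2 z →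
      F π γ1 γ2 z = (PmD proj1 proj2 K π γ1 γ2 z)⁻¹ • fun s' => PjD proj1 proj2 K π γ1 γ2 z s')
    {π : S → ℝ} (hπ : π ∈ subProbSet S) {γ1 : P1 → U1 → ℝ} (hγ1 : γ1 ∈ prescSet P1 U1)
    {γ2 : P2 → U2 → ℝ} (hγ2 : γ2 ∈ prescSet P2 U2) :
    ∑ z, PmD proj1 proj2 K π γ1 γ2 z * V' (F π γ1 γ2 z) =
      ∑ z, V' fun s' => PjD proj1 proj2 K π γ1 γ2 z s' :=
  Finset.sum_congr rfl fun z _ => hV'.sum_mul_apply_of_normalize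
    (PjD_mem_subProbSet proj1 proj2 hK hKsum hπ hγ1 hγ2 z) (hFsub π γ1 γ2 z) (hFbayes π γ1 γ2 z)

lemma continuousOn_upperValue {V' : (S' → ℝ) → ℝ} (hV' : ContinuousOn V' (subProbSet S'))
    (hK : ∀ s u1 u2 z s', 0 ≤ K s u1 u2 z s')
    (hKsum : ∀ s u1 u2, ∑ z, ∑ s', K s u1 u2 z s' = 1) :
    ContinuousOn (upperValue proj1 proj2 c K V') (subProbSet S) := by
  have hval : Continuous fun q : (S → ℝ) × prescSet P1 U1 × prescSet P2 U2 =>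
      (q.1, (q.2.1 : P1 → U1 → ℝ), (q.2.2 : P2 → U2 → ℝ)) := by
    fun_prop
  refine ContinuousOn.iInf_iSup (((continuous_stageCost proj1 proj2 c).comp hval).continuousOn.add
    (continuousOn_finsetSum _ fun z _ => hV'.comp ((continuous_PjD proj1 proj2 K z).comp
      hval).continuousOn ?_))
  rintro ⟨π, γ1, γ2⟩ ⟨hπ, -⟩
  exact PjD_mem_subProbSet proj1 proj2 hK hKsum hπ γ1.2 γ2.2 z

lemma homogeneousOnSubProb_upperValue {V' : (S' → ℝ) → ℝ} (hV' : HomogeneousOnSubProb V')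
    (hK : ∀ s u1 u2 z s', 0 ≤ K s u1 u2 z s')
    (hKsum : ∀ s u1 u2, ∑ z, ∑ s', K s u1 u2 z s' = 1) :
    HomogeneousOnSubProb (upperValue proj1 proj2 c K V') := by
  intro α hα π hπ
  have hpayoff : ∀ (γ1 : prescSet P1 U1) (γ2 : prescSet P2 U2),
      reducedPayoff proj1 proj2 c K V' (α • π) γ1 γ2 =
        α * reducedPayoff proj1 proj2 c K V' π γ1 γ2 := fun γ1 γ2 => by
    simp only [reducedPayoff, stageCost_smul, PjD_smul, mul_add, Finset.mul_sum]
    congr 1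
    exact Finset.sum_congr rfl fun z _ =>
      hV' α hα _ (PjD_mem_subProbSet proj1 proj2 hK hKsum hπ γ1.2 γ2.2 z)
  simp only [upperValue, hpayoff, Real.mul_iInf_of_nonneg hα.1, Real.mul_iSup_of_nonneg hα.1]

theorem continuousOn_and_homogeneousOnSubProb_of_bellman {V : (S → ℝ) → ℝ}
    {V' : (S' → ℝ) → ℝ} (hK : ∀ s u1 u2 z s', 0 ≤ K s u1 u2 z s')
    (hKsum : ∀ s u1 u2, ∑ z, ∑ s', K s u1 u2 z s' = 1)
    (F : (S → ℝ) → (P1 → U1 → ℝ) → (P2 → U2 → ℝ) → Z → (S' → ℝ))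
    (hFsub : ∀ π γ1 γ2 z, F π γ1 γ2 z ∈ subProbSet S')
    (hFbayes : ∀ π γ1 γ2 z, 0 < PmD proj1 proj2 K π γ1 γ2 z →
      F π γ1 γ2 z = (PmD proj1 proj2 K π γ1 γ2 z)⁻¹ • fun s' => PjD proj1 proj2 K π γ1 γ2 z s')
    (hV : ∀ π ∈ subProbSet S, V π = ⨅ γ1 : prescSet P1 U1, ⨆ γ2 : prescSet P2 U2,
      (stageCost proj1 proj2 c π γ1 γ2 +
        ∑ z, PmD proj1 proj2 K π γ1 γ2 z * V' (F π γ1 γ2 z)))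
    (hV' : ContinuousOn V' (subProbSet S') ∧ HomogeneousOnSubProb V') :
    ContinuousOn V (subProbSet S) ∧ HomogeneousOnSubProb V := by
  have hVeq : ∀ π ∈ subProbSet S, V π = upperValue proj1 proj2 c K V' π := fun π hπ => by
    rw [hV π hπ]
    refine iInf_congr fun γ1 => iSup_congr fun γ2 => ?_
    rw [sum_PmD_mul_eq_sum_apply_PjD hV'.2 hK hKsum F hFsub hFbayes hπ γ1.2 γ2.2]
    rfl
  refine ⟨(continuousOn_upperValue hV'.1 hK hKsum).congr hVeq, fun α hα π hπ => ?_⟩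
  rw [hVeq _ (smul_mem_subProbSet hα hπ), hVeq π hπ]
  exact homogeneousOnSubProb_upperValue hV'.2 hK hKsum α hα π hπ

end Stage

theorem stmt_9_general
    (T : ℕ) (S P1 P2 U1 U2 Z : ℕ → Type)
    [∀ t, Fintype (S t)]
    [∀ t, Fintype (U1 t)] [∀ t, Fintype (U2 t)] [∀ t, Fintype (Z t)]
    (proj1 : ∀ t, S t → P1 t) (proj2 : ∀ t, S t → P2 t)
    (c : ∀ t, S t → U1 t → U2 t → ℝ)
    (K : ∀ t, S t → U1 t → U2 t → Z t → S (t + 1) → ℝ)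
    (hK : ∀ t s u1 u2 z s', 0 ≤ K t s u1 u2 z s')
    (hKsum : ∀ t s u1 u2, ∑ z, ∑ s', K t s u1 u2 z s' = 1)
    (F : ∀ t, (S t → ℝ) → (P1 t → U1 t → ℝ) → (P2 t → U2 t → ℝ) → Z t →
      (S (t + 1) → ℝ))
    (hFsub : ∀ t π γ1 γ2 z, F t π γ1 γ2 z ∈ subProbSet (S (t + 1)))
    (hFbayes : ∀ t π γ1 γ2 z,
      0 < PmD (proj1 t) (proj2 t) (K t) π γ1 γ2 z →
      F t π γ1 γ2 z =
        (PmD (proj1 t) (proj2 t) (K t) π γ1 γ2 z)⁻¹ •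
          fun s' => PjD (proj1 t) (proj2 t) (K t) π γ1 γ2 z s')
    (V : ∀ t, (S t → ℝ) → ℝ)
    (hVT : ∀ μ, V (T + 1) μ = 0)
    (hV : ∀ t ≤ T, ∀ π ∈ subProbSet (S t),
      V t π =
        ⨅ γ1 : prescSet (P1 t) (U1 t), ⨆ γ2 : prescSet (P2 t) (U2 t),
          (stageCost (proj1 t) (proj2 t) (c t) π γ1 γ2 +
            ∑ z, PmD (proj1 t) (proj2 t) (K t) π γ1 γ2 z *
              V (t + 1) (F t π γ1 γ2 z))) :
    ∀ t ≤ T + 1,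
      ContinuousOn (V t) (subProbSet (S t)) ∧
      ∀ α ∈ Set.Icc (0:ℝ) 1, ∀ π ∈ subProbSet (S t),
        V t (α • π) = α * V t π := by
  intro t ht
  induction ht using Nat.decreasingInduction with
  | self => exact ⟨continuousOn_const.congr fun μ _ => hVT μ, fun α _ π _ => by simp [hVT]⟩
  | of_succ t ht ih =>
    exact continuousOn_and_homogeneousOnSubProb_of_bellman (hK t) (hKsum t) (F t) (hFsub t)
      (hFbayes t) (hV t (Nat.le_of_lt_succ ht)) ih

/-- Backward induction for the (upper) value functions of the expanded virtual
game: with `V_{T+1} ≡ 0` and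
`V_t(π) = inf_{γ1} sup_{γ2} [c̃_t(π,γ1,γ2) + Σ_z P^m_t(π,γ1,γ2)(z) V_{t+1}(F_t(π,γ1,γ2,z))]`
(`F_t` the Bayes update, extended homogeneously with `F_t(0,·) = 0`), every `V_t`
is continuous on the sub-probability vectors and homogeneous of degree one. -/
theorem stmt_9
    (T : ℕ) (S P1 P2 U1 U2 Z : ℕ → Type)
    [∀ t, Fintype (S t)] [∀ t, Fintype (P1 t)] [∀ t, Fintype (P2 t)]
    [∀ t, Fintype (U1 t)] [∀ t, Fintype (U2 t)] [∀ t, Fintype (Z t)]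
    [∀ t, Nonempty (U1 t)] [∀ t, Nonempty (U2 t)]
    (proj1 : ∀ t, S t → P1 t) (proj2 : ∀ t, S t → P2 t)
    (c : ∀ t, S t → U1 t → U2 t → ℝ)
    (K : ∀ t, S t → U1 t → U2 t → Z t → S (t + 1) → ℝ)
    (hK : ∀ t s u1 u2 z s', 0 ≤ K t s u1 u2 z s')
    (hKsum : ∀ t s u1 u2, ∑ z, ∑ s', K t s u1 u2 z s' = 1)
    (F : ∀ t, (S t → ℝ) → (P1 t → U1 t → ℝ) → (P2 t → U2 t → ℝ) → Z t →
      (S (t + 1) → ℝ))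
    (hFsub : ∀ t π γ1 γ2 z, F t π γ1 γ2 z ∈ subProbSet (S (t + 1)))
    (hFzero : ∀ t γ1 γ2 z, F t 0 γ1 γ2 z = 0)
    (hFbayes : ∀ t π γ1 γ2 z,
      0 < PmD (proj1 t) (proj2 t) (K t) π γ1 γ2 z →
      F t π γ1 γ2 z =
        (PmD (proj1 t) (proj2 t) (K t) π γ1 γ2 z)⁻¹ •
          fun s' => PjD (proj1 t) (proj2 t) (K t) π γ1 γ2 z s')
    (V : ∀ t, (S t → ℝ) → ℝ)
    (hVT : ∀ μ, V (T + 1) μ = 0)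
    (hV : ∀ t ≤ T, ∀ π ∈ subProbSet (S t),
      V t π =
        ⨅ γ1 : prescSet (P1 t) (U1 t), ⨆ γ2 : prescSet (P2 t) (U2 t),
          (stageCost (proj1 t) (proj2 t) (c t) π γ1 γ2 +
            ∑ z, PmD (proj1 t) (proj2 t) (K t) π γ1 γ2 z *
              V (t + 1) (F t π γ1 γ2 z))) :
    ∀ t ≤ T + 1,
      ContinuousOn (V t) (subProbSet (S t)) ∧
      ∀ α ∈ Set.Icc (0:ℝ) 1, ∀ π ∈ subProbSet (S t),
        V t (α • π) = α * V t π :=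
  stmt_9_general T S P1 P2 U1 U2 Z proj1 proj2 c K hK hKsum F hFsub hFbayes V hVT hV
end

section
/- With the backward-inductive definitions of w^u_t and V^u_t as above (finite spaces, trilinear stage cost and transition, Bayes-updated belief, homogeneous extension), for each time t and each sub-probability belief π, the inf-sup is attained: there exist γ1* ∈ B1_t with V^u_t(π) = max_{γ2} w^u_t(π, γ1*, γ2) = min_{γ1} max_{γ2} w^u_t(π, γ1, γ2); moreover γ1* can be chosen as a measurable function of π. -/
/-- The stage objective `w^u_t` of the min-max dynamic program. -/
def wStage {S S' P1 P2 U1 U2 Z : Type*} [Fintype S] [Fintype S'] [Fintype U1]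
    [Fintype U2] [Fintype Z]
    (proj1 : S → P1) (proj2 : S → P2) (c : S → U1 → U2 → ℝ)
    (K : S → U1 → U2 → Z → S' → ℝ)
    (F : (S → ℝ) → (P1 → U1 → ℝ) → (P2 → U2 → ℝ) → Z → (S' → ℝ))
    (Vnext : (S' → ℝ) → ℝ)
    (π : S → ℝ) (γ1 : P1 → U1 → ℝ) (γ2 : P2 → U2 → ℝ) : ℝ :=
  stageCost proj1 proj2 c π γ1 γ2 +
    ∑ z, PmD proj1 proj2 K π γ1 γ2 z * Vnext (F π γ1 γ2 z)

open Set Filter Topology Metric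

section ParametricExtrema

variable {X Y α : Type*} [TopologicalSpace X] [TopologicalSpace Y]
  [ConditionallyCompleteLinearOrder α] [TopologicalSpace α] [OrderTopology α]
  {D : Set X} {K : Set Y} {h : X → Y → α}

theorem IsCompact.continuousOn_iSup (hK : IsCompact K)
    (hh : ContinuousOn (Function.uncurry h) (D ×ˢ K)) :
    ContinuousOn (fun x => ⨆ y : K, h x y) D := by
  rw [continuousOn_iff_continuous_domRestrict]
  have : CompactSpace K := isCompact_iff_compactSpace.mp hK
  have hc : Continuous fun p : D × K => h p.1 p.2 :=
    hh.comp_continuous (f := fun p : D × K => ((p.1 : X), (p.2 : Y))) (by fun_prop)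
      fun p => ⟨p.1.2, p.2.2⟩
  have := isCompact_univ.continuous_sSup (f := fun (x : D) (y : K) => h x y) hc
  simp only [image_univ, sSup_range] at this
  exact this

theorem IsCompact.continuousOn_iInf (hK : IsCompact K)
    (hh : ContinuousOn (Function.uncurry h) (D ×ˢ K)) :
    ContinuousOn (fun x => ⨅ y : K, h x y) D :=
  hK.continuousOn_iSup (α := αᵒᵈ) hh

end ParametricExtrema

theorem ContinuousOn.measurableSet_sep_le {X α : Type*} [TopologicalSpace X] [MeasurableSpace X]
    [OpensMeasurableSpace X] [TopologicalSpace α] [Preorder α] [OrderClosedTopology α]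
    {D : Set X} (hD : MeasurableSet D) {f g : X → α} (hf : ContinuousOn f D)
    (hg : ContinuousOn g D) : MeasurableSet {x ∈ D | f x ≤ g x} := by
  have : {x ∈ D | f x ≤ g x} = (↑) '' {x : D | f x ≤ g x} := by ext; simp [and_comm]
  rw [this]
  exact (MeasurableEmbedding.subtype_coe hD).measurableSet_image.2
    (isClosed_le hf.domRestrict hg.domRestrict).measurableSet

section MeasurableSelection

variable {X Y : Type*} [MeasurableSpace X] [PseudoMetricSpace Y] [MeasurableSpace Y]
  {Γ : X → Set Y}

theorem exists_measurable_near_of_denseRange {u : ℕ → Y} (hu : DenseRange u) {r : ℝ}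
    (hr : 0 < r) (hΓ : ∀ y, MeasurableSet {x | (Γ x ∩ closedBall y r).Nonempty})
    {s : ℕ → Set X} (hs : ∀ i, MeasurableSet (s i))
    (hex : ∀ x, ∃ a ∈ Γ x, ∀ i, dist a (u i) < r → x ∈ s i) :
    ∃ g : X → Y, Measurable g ∧
      ∀ x, ∃ i, g x = u i ∧ x ∈ s i ∧ ∃ a ∈ Γ x, dist (g x) a ≤ r := by
  classical
  have hp : ∀ x, ∃ i, (Γ x ∩ closedBall (u i) r).Nonempty ∧ x ∈ s i := by
    intro x
    obtain ⟨a, ha, has⟩ := hex x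
    obtain ⟨i, hi⟩ := hu.exists_dist_lt a hr
    exact ⟨i, ⟨a, ha, mem_closedBall.2 hi.le⟩, has i hi⟩
  refine ⟨fun x => u (Nat.find (hp x)),
    measurable_from_nat.comp (measurable_find hp fun i => (hΓ _).inter (hs i)), fun x => ?_⟩
  obtain ⟨⟨a, ha, hau⟩, hxs⟩ := Nat.find_spec (hp x)
  exact ⟨_, rfl, hxs, a, ha, mem_closedBall'.1 hau⟩

variable [CompleteSpace Y] [SecondCountableTopology Y] [BorelSpace Y]

theorem exists_measurable_selection (hΓc : ∀ x, IsClosed (Γ x)) (hΓne : ∀ x, (Γ x).Nonempty)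
    (hΓ : ∀ y r, MeasurableSet {x | (Γ x ∩ closedBall y r).Nonempty}) :
    ∃ sel : X → Y, Measurable sel ∧ ∀ x, sel x ∈ Γ x := by
  rcases isEmpty_or_nonempty X with hX | ⟨⟨x₀⟩⟩
  · exact ⟨isEmptyElim, Subsingleton.measurable, isEmptyElim⟩
  have : Nonempty Y := (hΓne x₀).to_subtype.map Subtype.val
  obtain ⟨u, hu⟩ := TopologicalSpace.exists_dense_seq Y
  let Near (n : ℕ) (f : X → Y) : Prop :=
    Measurable f ∧ ∀ x, ∃ a ∈ Γ x, dist (f x) a ≤ (1 / 2 : ℝ) ^ n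
  have start : ∃ f, Near 0 f := by
    obtain ⟨g, hg, hgΓ⟩ := exists_measurable_near_of_denseRange hu one_pos (hΓ · 1)
      (s := fun _ => univ) (fun _ => .univ)
      fun x => (hΓne x).imp fun a ha => ⟨ha, fun _ _ => trivial⟩
    refine ⟨g, hg, fun x => ?_⟩
    obtain ⟨-, -, -, hx⟩ := hgΓ x
    simpa using hx
  have step : ∀ n f, Near n f →
      ∃ g, Near (n + 1) g ∧ ∀ x, dist (f x) (g x) ≤ 2 * (1 / 2 : ℝ) ^ n := by
    rintro n f ⟨hf, hfΓ⟩
    have hex : ∀ x, ∃ a ∈ Γ x, ∀ i, dist a (u i) < (1 / 2 : ℝ) ^ (n + 1) →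
        dist (f x) (u i) ≤ 2 * (1 / 2 : ℝ) ^ n := by
      intro x
      obtain ⟨a, ha, hfa⟩ := hfΓ x
      refine ⟨a, ha, fun i hi => ?_⟩
      calc dist (f x) (u i) ≤ dist (f x) a + dist a (u i) := dist_triangle _ _ _
        _ ≤ (1 / 2 : ℝ) ^ n + (1 / 2) ^ (n + 1) := add_le_add hfa hi.le
        _ ≤ 2 * (1 / 2 : ℝ) ^ n := by
          rw [pow_succ]; linarith [pow_nonneg (by norm_num : (0 : ℝ) ≤ 1 / 2) n]
    obtain ⟨g, hg, hgΓ⟩ := exists_measurable_near_of_denseRange hu (by positivity)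
      (hΓ · _) (s := fun i => {x | dist (f x) (u i) ≤ 2 * (1 / 2 : ℝ) ^ n})
      (fun i => measurableSet_le (hf.dist measurable_const) measurable_const) hex
    refine ⟨g, ⟨hg, fun x => ?_⟩, fun x => ?_⟩
    · obtain ⟨-, -, -, hx⟩ := hgΓ x
      exact hx
    · obtain ⟨i, hi, hx, -⟩ := hgΓ x
      rw [hi]
      exact hx
  obtain ⟨f₀, hf₀⟩ := start
  choose! next hnext hclose using step
  let f : ℕ → X → Y := fun n => Nat.rec f₀ next n
  have hf : ∀ n, Near n (f n) := by
    intro n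
    induction n with
    | zero => exact hf₀
    | succ n ih => exact hnext n _ ih
  have hcauchy (x : X) : CauchySeq (f · x) :=
    cauchySeq_of_le_geometric (1 / 2) 2 (by norm_num) fun n => hclose n _ (hf n) x
  choose sel hsel using fun x => cauchySeq_tendsto_of_complete (hcauchy x)
  refine ⟨sel, measurable_of_tendsto_metrizable (fun n => (hf n).1) (tendsto_pi_nhds.2 hsel),
    fun x => ?_⟩
  choose a ha hfa using fun n => (hf n).2 x
  have hdist : Tendsto (fun n => dist (f n x) (sel x) + (1 / 2 : ℝ) ^ n) atTop (𝓝 0) := by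
    simpa using (tendsto_iff_dist_tendsto_zero.1 (hsel x)).add
      (tendsto_pow_atTop_nhds_zero_of_lt_one (by norm_num : (0 : ℝ) ≤ 1 / 2) (by norm_num))
  refine (hΓc x).mem_of_tendsto (tendsto_iff_dist_tendsto_zero.2 (squeeze_zero
    (fun _ => dist_nonneg) (fun n => ?_) hdist)) (Eventually.of_forall ha)
  calc dist (a n) (sel x) ≤ dist (f n x) (a n) + dist (f n x) (sel x) := dist_triangle_left _ _ _
    _ ≤ _ := by linarith [hfa n]

end MeasurableSelection

theorem IsCompact.exists_isMinOn_and_iInf_eq {Y α : Type*} [TopologicalSpace Y]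
    [ConditionallyCompleteLinearOrder α] [TopologicalSpace α] [ClosedIicTopology α]
    {L : Set Y} (hL : IsCompact L) (hne : L.Nonempty) {f : Y → α} (hf : ContinuousOn f L) :
    ∃ y ∈ L, IsMinOn f L y ∧ ⨅ z : L, f z = f y :=
  let ⟨y, hy, hmin⟩ := hL.exists_isMinOn hne hf
  ⟨y, hy, hmin, hmin.iInf_eq hy⟩

section MinimizerSelection

variable {X Y : Type*} {D : Set X} {K : Set Y} {h : X → Y → ℝ} {x : X}

/-- Off `D` this is all of `K`, so that the selection theorem applies on the whole space. -/
def minimizerSet (D : Set X) (K : Set Y) (h : X → Y → ℝ) (x : X) : Set Y :=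
  {y ∈ K | x ∈ D → h x y ≤ ⨅ z : K, h x z}

theorem minimizerSet_of_mem (hx : x ∈ D) :
    minimizerSet D K h x = K ∩ h x ⁻¹' Iic (⨅ z : K, h x z) := by
  ext y
  simp [minimizerSet, hx]

theorem minimizerSet_of_notMem (hx : x ∉ D) : minimizerSet D K h x = K := by
  ext y
  simp [minimizerSet, hx]

variable [TopologicalSpace X] [MetricSpace Y]

theorem isClosed_minimizerSet (hK : IsCompact K)
    (hh : ContinuousOn (Function.uncurry h) (D ×ˢ K)) (x : X) :
    IsClosed (minimizerSet D K h x) := by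
  by_cases hx : x ∈ D
  · rw [minimizerSet_of_mem hx]
    exact (hh.uncurry_left x hx).preimage_isClosed_of_isClosed hK.isClosed isClosed_Iic
  · simpa [minimizerSet_of_notMem hx] using hK.isClosed

theorem minimizerSet_nonempty (hK : IsCompact K) (hKne : K.Nonempty)
    (hh : ContinuousOn (Function.uncurry h) (D ×ˢ K)) (x : X) :
    (minimizerSet D K h x).Nonempty := by
  by_cases hx : x ∈ D
  · obtain ⟨y, hy, -, hyeq⟩ := hK.exists_isMinOn_and_iInf_eq hKne (hh.uncurry_left x hx)
    exact ⟨y, hy, fun _ => hyeq.ge⟩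
  · simpa [minimizerSet_of_notMem hx] using hKne

theorem isMinOn_of_mem_minimizerSet (hK : IsCompact K)
    (hh : ContinuousOn (Function.uncurry h) (D ×ˢ K)) (hx : x ∈ D) {y : Y}
    (hy : y ∈ minimizerSet D K h x) : IsMinOn (h x) K y := by
  obtain ⟨y₀, -, hy₀min, hy₀eq⟩ :=
    hK.exists_isMinOn_and_iInf_eq ⟨y, hy.1⟩ (hh.uncurry_left x hx)
  exact fun z hz => ((hy.2 hx).trans hy₀eq.le).trans (hy₀min hz)

/-- On `D`, the minimizer set meets `B` iff the minimum over `K ∩ B` is at most the minimum over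
`K`; both minima are continuous in `x`. -/
theorem measurableSet_minimizerSet_inter_nonempty [MeasurableSpace X] [OpensMeasurableSpace X]
    (hD : MeasurableSet D) (hK : IsCompact K) (hh : ContinuousOn (Function.uncurry h) (D ×ˢ K))
    {B : Set Y} (hB : IsClosed B) :
    MeasurableSet {x | (minimizerSet D K h x ∩ B).Nonempty} := by
  by_cases hKB : (K ∩ B).Nonempty
  swap
  · convert MeasurableSet.empty
    exact eq_empty_iff_forall_notMem.2 fun x ⟨z, hz, hzB⟩ => hKB ⟨z, hz.1, hzB⟩
  have hKBc : IsCompact (K ∩ B) := hK.inter_right hB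
  have : {x | (minimizerSet D K h x ∩ B).Nonempty} =
      {x ∈ D | ⨅ z : ↥(K ∩ B), h x z ≤ ⨅ z : K, h x z} ∪ Dᶜ := by
    ext x
    by_cases hx : x ∈ D
    · obtain ⟨y, hy, hymin, hyeq⟩ := hKBc.exists_isMinOn_and_iInf_eq hKB
        ((hh.uncurry_left x hx).mono inter_subset_left)
      simp only [minimizerSet_of_mem hx, mem_ofPred_eq, mem_union, mem_compl_iff, hx, not_true,
        or_false, true_and, hyeq]
      constructor
      · rintro ⟨z, ⟨hzK, hzm⟩, hzB⟩
        exact (hymin ⟨hzK, hzB⟩).trans hzm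
      · exact fun hym => ⟨y, ⟨hy.1, hym⟩, hy.2⟩
    · simpa [minimizerSet_of_notMem hx, hx] using hKB
  rw [this]
  exact (ContinuousOn.measurableSet_sep_le hD
    (hKBc.continuousOn_iInf (hh.mono (prod_mono subset_rfl inter_subset_left)))
    (hK.continuousOn_iInf hh)).union hD.compl

theorem exists_measurable_isMinOn [MeasurableSpace X] [OpensMeasurableSpace X] [CompleteSpace Y]
    [SecondCountableTopology Y] [MeasurableSpace Y] [BorelSpace Y] (hD : MeasurableSet D)
    (hK : IsCompact K) (hKne : K.Nonempty) (hh : ContinuousOn (Function.uncurry h) (D ×ˢ K)) :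
    ∃ sel : X → Y, Measurable sel ∧ ∀ x ∈ D, sel x ∈ K ∧ IsMinOn (h x) K (sel x) := by
  obtain ⟨sel, hsel, hselmin⟩ := exists_measurable_selection (isClosed_minimizerSet hK hh)
    (minimizerSet_nonempty hK hKne hh)
    fun y r => measurableSet_minimizerSet_inter_nonempty hD hK hh isClosed_closedBall
  exact ⟨sel, hsel, fun x hx => ⟨(hselmin x).1, isMinOn_of_mem_minimizerSet hK hh hx (hselmin x)⟩⟩

end MinimizerSelection

section MinimaxDP

variable {S S' P1 P2 U1 U2 Z : Type*} [Fintype S] [Fintype U1] [Fintype U2]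

theorem isCompact_subProbSet : IsCompact (subProbSet S) := by
  refine (isCompact_univ_pi fun _ => isCompact_Icc (a := (0 : ℝ)) (b := 1)).of_isClosed_subset
    ?_ fun p hp => mem_univ_pi.2 fun s => ⟨hp.1 s, ?_⟩
  · simp only [subProbSet, ofPred_and, ofPred_forall]
    exact (isClosed_iInter fun s => isClosed_le continuous_const (continuous_apply s)).inter
      (isClosed_le (by fun_prop) continuous_const)
  · exact (Finset.single_le_sum (fun i _ => hp.1 i) (Finset.mem_univ s)).trans hp.2

theorem isCompact_prescSet (P U : Type*) [Fintype P] [Fintype U] :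
    IsCompact (prescSet P U) := by
  refine (isCompact_univ_pi fun _ => isCompact_univ_pi fun _ =>
    isCompact_Icc (a := (0 : ℝ)) (b := 1)).of_isClosed_subset ?_ fun γ hγ =>
      mem_univ_pi.2 fun p => mem_univ_pi.2 fun u => ⟨(hγ p).1 u, ?_⟩
  · simp only [prescSet, ofPred_forall, ofPred_and]
    exact isClosed_iInter fun p =>
      (isClosed_iInter fun u => isClosed_le continuous_const (by fun_prop)).inter
        (isClosed_eq (by fun_prop) continuous_const)
  · exact (Finset.single_le_sum (fun v _ => (hγ p).1 v) (Finset.mem_univ u)).trans (hγ p).2.le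

theorem prescSet_nonempty (P U : Type*) [Fintype U] [Nonempty U] : (prescSet P U).Nonempty :=
  ⟨fun _ _ => (Fintype.card U : ℝ)⁻¹, fun _ => ⟨fun _ => by positivity, by simp⟩⟩

/-- The degree-one homogeneous extension `μ ↦ |μ| V(μ / |μ|)`; it is `0` at `μ = 0`
because `0⁻¹ = 0`. -/
noncomputable def homogeneousExt (V : (S → ℝ) → ℝ) (μ : S → ℝ) : ℝ :=
  (∑ s, μ s) * V ((∑ s, μ s)⁻¹ • μ)

theorem inv_sum_smul_mem_subProbSet {μ : S → ℝ} (hμ : ∀ s, 0 ≤ μ s) :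
    (∑ s, μ s)⁻¹ • μ ∈ subProbSet S := by
  have hsum : 0 ≤ ∑ s, μ s := Finset.sum_nonneg fun s _ => hμ s
  refine ⟨fun s => mul_nonneg (inv_nonneg.2 hsum) (hμ s), ?_⟩
  simp only [Pi.smul_apply, smul_eq_mul, ← Finset.mul_sum]
  rcases hsum.eq_or_lt with h0 | h0
  · simp [← h0]
  · rw [inv_mul_cancel₀ h0.ne']

theorem continuousOn_homogeneousExt {V : (S → ℝ) → ℝ} (hV : ContinuousOn V (subProbSet S)) :
    ContinuousOn (homogeneousExt V) {μ | ∀ s, 0 ≤ μ s} := by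
  have hsum : Continuous fun μ : S → ℝ => ∑ s, μ s := by fun_prop
  intro μ₀ hμ₀
  by_cases h0 : ∑ s, μ₀ s = 0
  · -- `V` is bounded, so the extension is squeezed to `0` by a multiple of `∑ s, μ s`
    obtain ⟨M, hM⟩ := isCompact_subProbSet.exists_bound_of_continuousOn hV
    have hbound : ∀ μ ∈ {μ : S → ℝ | ∀ s, 0 ≤ μ s}, ‖homogeneousExt V μ‖ ≤ M * ∑ s, μ s :=
      fun μ hμ => by
        rw [homogeneousExt, norm_mul, Real.norm_of_nonneg (Finset.sum_nonneg fun s _ => hμ s),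
          mul_comm]
        exact mul_le_mul_of_nonneg_right (hM _ (inv_sum_smul_mem_subProbSet hμ))
          (Finset.sum_nonneg fun s _ => hμ s)
    have hlim : Tendsto (fun μ : S → ℝ => M * ∑ s, μ s) (𝓝[{μ | ∀ s, 0 ≤ μ s}] μ₀) (𝓝 0) :=
      ((continuous_const.mul hsum).tendsto' μ₀ 0 (by simp [h0])).mono_left nhdsWithin_le_nhds
    rw [ContinuousWithinAt, homogeneousExt, h0, zero_mul]
    exact squeeze_zero_norm' (eventually_nhdsWithin_of_forall hbound) hlim
  · have hnormalize : ContinuousAt (fun μ : S → ℝ => (∑ s, μ s)⁻¹ • μ) μ₀ :=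
      (hsum.continuousAt.inv₀ h0).smul continuousAt_id
    exact hsum.continuousWithinAt.mul <| (hV _ (inv_sum_smul_mem_subProbSet hμ₀)).comp
      (f := fun μ : S → ℝ => (∑ s, μ s)⁻¹ • μ) hnormalize.continuousWithinAt
      fun μ hμ => inv_sum_smul_mem_subProbSet hμ

variable (proj1 : S → P1) (proj2 : S → P2) (c : S → U1 → U2 → ℝ)
  (K : S → U1 → U2 → Z → S' → ℝ)
  (F : (S → ℝ) → (P1 → U1 → ℝ) → (P2 → U2 → ℝ) → Z → (S' → ℝ))

theorem PjD_nonneg (hK : ∀ s u1 u2 z s', 0 ≤ K s u1 u2 z s') {π : S → ℝ} (hπ : ∀ s, 0 ≤ π s)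
    {γ1 : P1 → U1 → ℝ} (hγ1 : γ1 ∈ prescSet P1 U1) {γ2 : P2 → U2 → ℝ}
    (hγ2 : γ2 ∈ prescSet P2 U2) (z : Z) (s' : S') : 0 ≤ PjD proj1 proj2 K π γ1 γ2 z s' :=
  Finset.sum_nonneg fun s _ => Finset.sum_nonneg fun u1 _ => Finset.sum_nonneg fun u2 _ =>
    mul_nonneg (mul_nonneg (mul_nonneg (hπ s) ((hγ1 _).1 u1)) ((hγ2 _).1 u2)) (hK s u1 u2 z s')

variable [Fintype S'] [Fintype Z]

def IsBayesUpdate : Prop :=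
  ∀ π γ1 γ2 z, 0 < PmD proj1 proj2 K π γ1 γ2 z →
    F π γ1 γ2 z = (PmD proj1 proj2 K π γ1 γ2 z)⁻¹ • fun s' => PjD proj1 proj2 K π γ1 γ2 z s'

theorem wStage_eq_add_sum_homogeneousExt (hFbayes : IsBayesUpdate proj1 proj2 K F)
    (V' : (S' → ℝ) → ℝ) {π : S → ℝ} {γ1 : P1 → U1 → ℝ} {γ2 : P2 → U2 → ℝ}
    (hPm : ∀ z, 0 ≤ PmD proj1 proj2 K π γ1 γ2 z) :
    wStage proj1 proj2 c K F V' π γ1 γ2 = stageCost proj1 proj2 c π γ1 γ2 +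
      ∑ z, homogeneousExt V' (PjD proj1 proj2 K π γ1 γ2 z) := by
  refine congrArg _ (Finset.sum_congr rfl fun z _ => ?_)
  rcases (hPm z).eq_or_lt with h0 | h0
  · rw [← h0, zero_mul, homogeneousExt, ← PmD, ← h0, zero_mul]
  · rw [hFbayes π γ1 γ2 z h0, homogeneousExt, ← PmD]

theorem continuousOn_wStage (hK : ∀ s u1 u2 z s', 0 ≤ K s u1 u2 z s')
    (hFbayes : IsBayesUpdate proj1 proj2 K F)
    {V' : (S' → ℝ) → ℝ} (hV' : ContinuousOn V' (subProbSet S')) :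
    ContinuousOn (Function.uncurry fun (q : (S → ℝ) × (P1 → U1 → ℝ)) (γ2 : P2 → U2 → ℝ) =>
        wStage proj1 proj2 c K F V' q.1 q.2 γ2)
      ((subProbSet S ×ˢ prescSet P1 U1) ×ˢ prescSet P2 U2) := by
  have hPj : ∀ p ∈ (subProbSet S ×ˢ prescSet P1 U1) ×ˢ prescSet P2 U2, ∀ z s',
      0 ≤ PjD proj1 proj2 K p.1.1 p.1.2 p.2 z s' :=
    fun _ ⟨⟨hπ, hγ1⟩, hγ2⟩ => PjD_nonneg proj1 proj2 K hK hπ.1 hγ1 hγ2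
  refine ContinuousOn.congr ?_ fun p hp => wStage_eq_add_sum_homogeneousExt proj1 proj2 c K F
    hFbayes V' fun z => Finset.sum_nonneg fun s' _ => hPj p hp z s'
  refine (by unfold stageCost; fun_prop : Continuous _).continuousOn.add
    (continuousOn_finsetSum _ fun z _ => (continuousOn_homogeneousExt hV').comp
      (by unfold PjD; fun_prop : Continuous _).continuousOn fun p hp => hPj p hp z)

theorem continuousOn_iInf_iSup_wStage [Fintype P1] [Fintype P2]
    (hK : ∀ s u1 u2 z s', 0 ≤ K s u1 u2 z s')
    (hFbayes : IsBayesUpdate proj1 proj2 K F)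
    {V' : (S' → ℝ) → ℝ} (hV' : ContinuousOn V' (subProbSet S')) :
    ContinuousOn (fun π => ⨅ γ1 : prescSet P1 U1, ⨆ γ2 : prescSet P2 U2,
      wStage proj1 proj2 c K F V' π γ1 γ2) (subProbSet S) :=
  (isCompact_prescSet P1 U1).continuousOn_iInf
    (h := fun π γ1 => ⨆ γ2 : prescSet P2 U2, wStage proj1 proj2 c K F V' π γ1 γ2) <|
      (isCompact_prescSet P2 U2).continuousOn_iSup
        (continuousOn_wStage proj1 proj2 c K F hK hFbayes hV')

theorem exists_measurable_minimax_selector [Fintype P1] [Fintype P2] [Nonempty U1] [Nonempty U2]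
    (hK : ∀ s u1 u2 z s', 0 ≤ K s u1 u2 z s')
    (hFbayes : IsBayesUpdate proj1 proj2 K F)
    {V' : (S' → ℝ) → ℝ} (hV' : ContinuousOn V' (subProbSet S')) :
    ∃ sel : (S → ℝ) → (P1 → U1 → ℝ), Measurable sel ∧ ∀ π ∈ subProbSet S,
      sel π ∈ prescSet P1 U1 ∧
      (⨅ γ1 : prescSet P1 U1, ⨆ γ2 : prescSet P2 U2, wStage proj1 proj2 c K F V' π γ1 γ2) =
        (⨆ γ2 : prescSet P2 U2, wStage proj1 proj2 c K F V' π (sel π) γ2) ∧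
      ∃ γ2s ∈ prescSet P2 U2, (⨆ γ2 : prescSet P2 U2, wStage proj1 proj2 c K F V' π (sel π) γ2) =
        wStage proj1 proj2 c K F V' π (sel π) γ2s := by
  have hw := continuousOn_wStage proj1 proj2 c K F hK hFbayes hV'
  obtain ⟨sel, hsel, hmin⟩ := exists_measurable_isMinOn isCompact_subProbSet.isClosed.measurableSet
    (isCompact_prescSet P1 U1) (prescSet_nonempty P1 U1)
    (h := fun π γ1 => ⨆ γ2 : prescSet P2 U2, wStage proj1 proj2 c K F V' π γ1 γ2)
    ((isCompact_prescSet P2 U2).continuousOn_iSup hw)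
  refine ⟨sel, hsel, fun π hπ => ?_⟩
  obtain ⟨hselγ, hselmin⟩ := hmin π hπ
  obtain ⟨γ2s, hγ2s, hmax⟩ := (isCompact_prescSet P2 U2).exists_isMaxOn (prescSet_nonempty P2 U2)
    (hw.uncurry_left (π, sel π) (mk_mem_prod hπ hselγ))
  exact ⟨hselγ, hselmin.iInf_eq hselγ, γ2s, hγ2s, hmax.iSup_eq hγ2s⟩

end MinimaxDP

theorem stmt_10_general
    (T : ℕ) (S P1 P2 U1 U2 Z : ℕ → Type)
    [∀ t, Fintype (S t)] [∀ t, Fintype (P1 t)] [∀ t, Fintype (P2 t)]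
    [∀ t, Fintype (U1 t)] [∀ t, Fintype (U2 t)] [∀ t, Fintype (Z t)]
    [∀ t, Nonempty (U1 t)] [∀ t, Nonempty (U2 t)]
    (proj1 : ∀ t, S t → P1 t) (proj2 : ∀ t, S t → P2 t)
    (c : ∀ t, S t → U1 t → U2 t → ℝ)
    (K : ∀ t, S t → U1 t → U2 t → Z t → S (t + 1) → ℝ)
    (hK : ∀ t s u1 u2 z s', 0 ≤ K t s u1 u2 z s')
    (F : ∀ t, (S t → ℝ) → (P1 t → U1 t → ℝ) → (P2 t → U2 t → ℝ) → Z t →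
      (S (t + 1) → ℝ))
    (hFbayes : ∀ t π γ1 γ2 z,
      0 < PmD (proj1 t) (proj2 t) (K t) π γ1 γ2 z →
      F t π γ1 γ2 z =
        (PmD (proj1 t) (proj2 t) (K t) π γ1 γ2 z)⁻¹ •
          fun s' => PjD (proj1 t) (proj2 t) (K t) π γ1 γ2 z s')
    (V : ∀ t, (S t → ℝ) → ℝ)
    (hVT : ∀ μ, V (T + 1) μ = 0)
    (hV : ∀ t ≤ T, ∀ π ∈ subProbSet (S t),
      V t π =
        ⨅ γ1 : prescSet (P1 t) (U1 t), ⨆ γ2 : prescSet (P2 t) (U2 t),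
          wStage (proj1 t) (proj2 t) (c t) (K t) (F t) (V (t + 1)) π γ1 γ2) :
    ∀ t ≤ T,
      ∃ sel : (S t → ℝ) → (P1 t → U1 t → ℝ),
        Measurable sel ∧
        ∀ π ∈ subProbSet (S t),
          sel π ∈ prescSet (P1 t) (U1 t) ∧
          V t π =
            (⨆ γ2 : prescSet (P2 t) (U2 t),
              wStage (proj1 t) (proj2 t) (c t) (K t) (F t) (V (t + 1)) π
                (sel π) γ2) ∧
          ∃ γ2s ∈ prescSet (P2 t) (U2 t),
            (⨆ γ2 : prescSet (P2 t) (U2 t),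
              wStage (proj1 t) (proj2 t) (c t) (K t) (F t) (V (t + 1)) π
                (sel π) γ2) =
            wStage (proj1 t) (proj2 t) (c t) (K t) (F t) (V (t + 1)) π
              (sel π) γ2s := by
  have hcont : ∀ d t, t + d = T + 1 → ContinuousOn (V t) (subProbSet (S t)) := by
    intro d
    induction d with
    | zero =>
      intro t ht
      obtain rfl : t = T + 1 := ht
      exact continuousOn_const.congr fun μ _ => hVT μ
    | succ d ih =>
      intro t ht
      exact (continuousOn_iInf_iSup_wStage (proj1 t) (proj2 t) (c t) (K t) (F t) (hK t)
        (hFbayes t) (ih (t + 1) (by omega))).congr fun π hπ => hV t (by omega) π hπ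
  intro t ht
  obtain ⟨sel, hsel, hopt⟩ := exists_measurable_minimax_selector (proj1 t) (proj2 t) (c t) (K t)
    (F t) (hK t) (hFbayes t) (hcont (T - t) (t + 1) (by omega))
  refine ⟨sel, hsel, fun π hπ => ?_⟩
  obtain ⟨hselγ, hval, hmax⟩ := hopt π hπ
  exact ⟨hselγ, (hV t ht π hπ).trans hval, hmax⟩

/-- Attainment and measurable selection in the min-max dynamic program: at each
time `t ≤ T` there is a measurable map `sel` from beliefs to prescriptions of
player 1 such that for every sub-probability belief `π`, `sel π` is a valid
prescription attaining the inf-sup, i.e.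
`V_t(π) = sup_{γ2} w^u_t(π, sel π, γ2) = inf_{γ1} sup_{γ2} w^u_t(π, γ1, γ2)`,
and the inner sup is attained as a max. -/
theorem stmt_10
    (T : ℕ) (S P1 P2 U1 U2 Z : ℕ → Type)
    [∀ t, Fintype (S t)] [∀ t, Fintype (P1 t)] [∀ t, Fintype (P2 t)]
    [∀ t, Fintype (U1 t)] [∀ t, Fintype (U2 t)] [∀ t, Fintype (Z t)]
    [∀ t, Nonempty (U1 t)] [∀ t, Nonempty (U2 t)]
    (proj1 : ∀ t, S t → P1 t) (proj2 : ∀ t, S t → P2 t)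
    (c : ∀ t, S t → U1 t → U2 t → ℝ)
    (K : ∀ t, S t → U1 t → U2 t → Z t → S (t + 1) → ℝ)
    (hK : ∀ t s u1 u2 z s', 0 ≤ K t s u1 u2 z s')
    (hKsum : ∀ t s u1 u2, ∑ z, ∑ s', K t s u1 u2 z s' = 1)
    (F : ∀ t, (S t → ℝ) → (P1 t → U1 t → ℝ) → (P2 t → U2 t → ℝ) → Z t →
      (S (t + 1) → ℝ))
    (hFsub : ∀ t π γ1 γ2 z, F t π γ1 γ2 z ∈ subProbSet (S (t + 1)))
    (hFzero : ∀ t γ1 γ2 z, F t 0 γ1 γ2 z = 0)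
    (hFbayes : ∀ t π γ1 γ2 z,
      0 < PmD (proj1 t) (proj2 t) (K t) π γ1 γ2 z →
      F t π γ1 γ2 z =
        (PmD (proj1 t) (proj2 t) (K t) π γ1 γ2 z)⁻¹ •
          fun s' => PjD (proj1 t) (proj2 t) (K t) π γ1 γ2 z s')
    (V : ∀ t, (S t → ℝ) → ℝ)
    (hVT : ∀ μ, V (T + 1) μ = 0)
    (hV : ∀ t ≤ T, ∀ π ∈ subProbSet (S t),
      V t π =
        ⨅ γ1 : prescSet (P1 t) (U1 t), ⨆ γ2 : prescSet (P2 t) (U2 t),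
          wStage (proj1 t) (proj2 t) (c t) (K t) (F t) (V (t + 1)) π γ1 γ2) :
    ∀ t ≤ T,
      ∃ sel : (S t → ℝ) → (P1 t → U1 t → ℝ),
        Measurable sel ∧
        ∀ π ∈ subProbSet (S t),
          sel π ∈ prescSet (P1 t) (U1 t) ∧
          V t π =
            (⨆ γ2 : prescSet (P2 t) (U2 t),
              wStage (proj1 t) (proj2 t) (c t) (K t) (F t) (V (t + 1)) π
                (sel π) γ2) ∧
          ∃ γ2s ∈ prescSet (P2 t) (U2 t),
            (⨆ γ2 : prescSet (P2 t) (U2 t),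
              wStage (proj1 t) (proj2 t) (c t) (K t) (F t) (V (t + 1)) π
                (sel π) γ2) =
            wStage (proj1 t) (proj2 t) (c t) (K t) (F t) (V (t + 1)) π
              (sel π) γ2s :=
  stmt_10_general T S P1 P2 U1 U2 Z proj1 proj2 c K hK F hFbayes V hVT hV
end

section
/- Let D(u) be a finite set of vectors in ℝ^k for each u in a finite set U, and define w(γ1, γ2) = Σ_{u∈U} γ2(u) · max_{d ∈ D(u)} ⟨d, γ1⟩ for γ1 in a compact convex set B1 ⊆ ℝ^k and γ2 ∈ Δ(U). Then min_{γ1∈B1} max_{γ2∈Δ(U)} w(γ1,γ2) = max_{γ2∈Δ(U)} max_{e∈E} min_{γ1∈B1} Σ_{u} Σ_{d∈D(u)} γ2(u) e(u)(d) ⟨d, γ1⟩, where E is the set of maps e : U → Δ(∪_u D(u)) with e(u) supported on D(u). -/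
open Finset

lemma stmt13_wavg_le_sup' {α : Type*} (s : Finset α) (hs : s.Nonempty) (c f : α → ℝ)
    (hc : ∀ a ∈ s, 0 ≤ c a) (hsum : ∑ a ∈ s, c a = 1) :
    ∑ a ∈ s, c a * f a ≤ s.sup' hs f := by
  calc ∑ a ∈ s, c a * f a ≤ ∑ a ∈ s, c a * s.sup' hs f :=
        Finset.sum_le_sum fun a ha => mul_le_mul_of_nonneg_left (Finset.le_sup' f ha) (hc a ha)
    _ = s.sup' hs f := by rw [← Finset.sum_mul, hsum, one_mul]

lemma stmt13_cont {k : ℕ} (d : Fin k → ℝ) :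
    Continuous fun x : Fin k → ℝ => ∑ j, d j * x j :=
  continuous_finset_sum _ fun j _ => continuous_const.mul (continuous_apply j)

lemma stmt13_bddBelow {k : ℕ} {B1 : Set (Fin k → ℝ)} (hB1c : IsCompact B1)
    {f : (Fin k → ℝ) → ℝ} (hf : Continuous f) :
    BddBelow (Set.range fun x : B1 => f x.1) := by
  rw [← Set.image_eq_range]
  exact (hB1c.image hf).bddBelow

lemma stmt13_bddAbove {k : ℕ} {B1 : Set (Fin k → ℝ)} (hB1c : IsCompact B1)
    {f : (Fin k → ℝ) → ℝ} (hf : Continuous f) :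
    BddAbove (Set.range fun x : B1 => f x.1) := by
  rw [← Set.image_eq_range]
  exact (hB1c.image hf).bddAbove

lemma stmt13_core {k : ℕ} {ι : Type*} [Fintype ι] [Nonempty ι]
    (B1 : Set (Fin k → ℝ)) (hB1c : IsCompact B1) (hB1v : Convex ℝ B1) (hB1n : B1.Nonempty)
    (v : ι → Fin k → ℝ) :
    (⨅ x : B1, Finset.univ.sup' Finset.univ_nonempty fun i => ∑ j, v i j * x.1 j)
      = ⨆ μ : {μ : ι → ℝ // (∀ i, 0 ≤ μ i) ∧ ∑ i, μ i = 1},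
          ⨅ x : B1, ∑ i, μ.1 i * ∑ j, v i j * x.1 j := by
  classical
  have : Nonempty B1 := hB1n.to_subtype
  set Φ : ι → (Fin k → ℝ) → ℝ := fun i x => ∑ j, v i j * x j with hΦ
  obtain ⟨i0⟩ := ‹Nonempty ι›
  obtain ⟨x0, hx0⟩ := hB1n
  -- nonemptiness of the simplex
  have hΔ : Nonempty {μ : ι → ℝ // (∀ i, 0 ≤ μ i) ∧ ∑ i, μ i = 1} := by
    refine ⟨⟨fun i => if i = i0 then 1 else 0, fun i => by positivity, ?_⟩⟩
    simp
  have hbd : ∀ μ : {μ : ι → ℝ // (∀ i, 0 ≤ μ i) ∧ ∑ i, μ i = 1},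
      BddBelow (Set.range fun x : B1 => ∑ i, μ.1 i * Φ i x.1) := by
    intro μ
    exact stmt13_bddBelow hB1c (continuous_finset_sum _ fun i _ =>
      continuous_const.mul (stmt13_cont (v i)))
  have hGbd : BddBelow (Set.range fun x : B1 =>
      Finset.univ.sup' Finset.univ_nonempty fun i => Φ i x.1) := by
    obtain ⟨b, hb⟩ := stmt13_bddBelow hB1c (stmt13_cont (v i0))
    refine ⟨b, ?_⟩
    rintro _ ⟨x, rfl⟩
    exact le_trans (hb ⟨x, rfl⟩) (Finset.le_sup' (fun i => Φ i x.1) (Finset.mem_univ i0))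
  have hSupBd : BddAbove (Set.range fun μ : {μ : ι → ℝ // (∀ i, 0 ≤ μ i) ∧ ∑ i, μ i = 1} =>
      ⨅ x : B1, ∑ i, μ.1 i * Φ i x.1) := by
    refine ⟨Finset.univ.sup' Finset.univ_nonempty fun i => Φ i x0, ?_⟩
    rintro _ ⟨μ, rfl⟩
    refine le_trans (ciInf_le (hbd μ) ⟨x0, hx0⟩) ?_
    exact stmt13_wavg_le_sup' _ _ _ _ (fun i _ => μ.2.1 i) μ.2.2
  refine le_antisymm ?_ ?_
  · -- hard direction
    set c : ℝ := ⨅ x : B1, Finset.univ.sup' Finset.univ_nonempty fun i => Φ i x.1 with hc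
    set A : Set (ι → ℝ) := {y | ∀ i, y i < c} with hA
    set C : Set (ι → ℝ) := {y | ∃ x ∈ B1, ∀ i, Φ i x ≤ y i} with hC
    have hAopen : IsOpen A := by
      have : A = Set.univ.pi fun _ : ι => Set.Iio c := by
        ext y; simp [hA, Set.mem_pi]
      rw [this]
      exact isOpen_set_pi Set.finite_univ fun _ _ => isOpen_Iio
    have hAconv : Convex ℝ A := by
      have : A = Set.univ.pi fun _ : ι => Set.Iio c := by
        ext y; simp [hA, Set.mem_pi]
      rw [this]
      exact convex_pi fun _ _ => convex_Iio c
    have hΦlin : ∀ i (a b : ℝ) (x y : Fin k → ℝ),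
        Φ i (a • x + b • y) = a * Φ i x + b * Φ i y := by
      intro i a b x y
      simp only [hΦ, Pi.add_apply, Pi.smul_apply, smul_eq_mul]
      rw [Finset.mul_sum, Finset.mul_sum, ← Finset.sum_add_distrib]
      exact Finset.sum_congr rfl fun j _ => by ring
    have hCconv : Convex ℝ C := by
      rintro y1 ⟨x1, hx1, h1⟩ y2 ⟨x2, hx2, h2⟩ a b ha hb hab
      refine ⟨a • x1 + b • x2, hB1v hx1 hx2 ha hb hab, fun i => ?_⟩
      rw [hΦlin]
      exact add_le_add (mul_le_mul_of_nonneg_left (h1 i) ha)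
        (mul_le_mul_of_nonneg_left (h2 i) hb)
    have hdisj : Disjoint A C := by
      rw [Set.disjoint_left]
      rintro y hyA ⟨x, hx, hxy⟩
      have h1 : (Finset.univ.sup' Finset.univ_nonempty fun i => Φ i x) < c := by
        rw [Finset.sup'_lt_iff]
        exact fun i _ => lt_of_le_of_lt (hxy i) (hyA i)
      have h2 : c ≤ Finset.univ.sup' Finset.univ_nonempty fun i => Φ i x :=
        ciInf_le hGbd ⟨x, hx⟩
      linarith
    obtain ⟨f, u, hfA, hfC⟩ := geometric_hahn_banach_open hAconv hAopen hCconv hdisj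
    set lam : ι → ℝ := fun i => f (fun j => if i = j then (1 : ℝ) else 0) with hlam
    have hfeval : ∀ y : ι → ℝ, f y = ∑ i, y i * lam i := by
      intro y
      conv_lhs => rw [pi_eq_sum_univ y]
      rw [map_sum]
      exact Finset.sum_congr rfl fun i _ => by rw [map_smul, smul_eq_mul]
    have hb0C : (fun i => Φ i x0) ∈ C := ⟨x0, hx0, fun i => le_rfl⟩
    have hu0 : u ≤ f (fun i => Φ i x0) := hfC _ hb0C
    have hlam_nonneg : ∀ i, 0 ≤ lam i := by
      intro i1
      by_contra hneg
      push_neg at hneg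
      set t : ℝ := max ((u - f fun i => Φ i x0) / lam i1) 0 + 1 with ht
      have ht0 : 0 ≤ t := by
        have := le_max_right ((u - f fun i => Φ i x0) / lam i1) 0
        rw [ht]; linarith
      have hyC : ((fun i => Φ i x0) + t • fun j => if i1 = j then (1:ℝ) else 0) ∈ C := by
        refine ⟨x0, hx0, fun i => ?_⟩
        simp only [Pi.add_apply, Pi.smul_apply, smul_eq_mul]
        have : 0 ≤ t * (if i1 = i then (1:ℝ) else 0) := by positivity
        linarith
      have hval : f ((fun i => Φ i x0) + t • fun j => if i1 = j then (1:ℝ) else 0)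
          = f (fun i => Φ i x0) + t * lam i1 := by
        rw [map_add, map_smul, smul_eq_mul]
      have hge := hfC _ hyC
      rw [hval] at hge
      have htgt : (u - f fun i => Φ i x0) / lam i1 < t := by
        have := le_max_left ((u - f fun i => Φ i x0) / lam i1) 0
        linarith [le_max_left ((u - f fun i => Φ i x0) / lam i1) 0]
      have : t * lam i1 < ((u - f fun i => Φ i x0) / lam i1) * lam i1 :=
        (mul_lt_mul_right_of_neg hneg).mpr htgt
      rw [div_mul_cancel₀ _ (ne_of_lt hneg)] at this
      linarith
    set S : ℝ := ∑ i, lam i with hS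
    have hfconst : ∀ r : ℝ, f (fun _ => r) = r * S := by
      intro r
      rw [hfeval, hS, Finset.mul_sum]
    have hS0 : 0 < S := by
      rcases lt_or_eq_of_le (Finset.sum_nonneg fun i _ => hlam_nonneg i) with h | h
      · exact h
      · exfalso
        have hall : ∀ i ∈ Finset.univ, lam i = 0 :=
          (Finset.sum_eq_zero_iff_of_nonneg fun i _ => hlam_nonneg i).mp h.symm
        have hA1 : (fun _ : ι => c - 1) ∈ A := fun i => by simp
        have hSz : S = 0 := by rw [hS, ← h]
        have h1 := hfA _ hA1
        rw [hfconst, hSz, mul_zero] at h1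
        have h2 : f (fun i => Φ i x0) = 0 := by
          rw [hfeval]
          exact Finset.sum_eq_zero fun i _ => by rw [hall i (Finset.mem_univ i), mul_zero]
        linarith
    have hcS : c * S ≤ u := by
      by_contra hlt
      push_neg at hlt
      set ε : ℝ := (c * S - u) / S with hε
      have hε0 : 0 < ε := div_pos (by linarith) hS0
      have hAε : (fun _ : ι => c - ε) ∈ A := fun i => by simp [hε0]
      have := hfA _ hAε
      rw [hfconst] at this
      have : c * S - ε * S < u := by nlinarith
      have hεS : ε * S = c * S - u := by
        rw [hε, div_mul_cancel₀ _ (ne_of_gt hS0)]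
      linarith
    have hkey : ∀ x ∈ B1, c ≤ ∑ i, (lam i / S) * Φ i x := by
      intro x hx
      have hyC : (fun i => Φ i x) ∈ C := ⟨x, hx, fun i => le_rfl⟩
      have h1 : u ≤ ∑ i, Φ i x * lam i := by
        have := hfC _ hyC; rwa [hfeval] at this
      have h2 : ∑ i, (lam i / S) * Φ i x = (∑ i, Φ i x * lam i) / S := by
        rw [Finset.sum_div]
        exact Finset.sum_congr rfl fun i _ => by ring
      rw [h2, le_div_iff₀ hS0]
      calc c * S ≤ u := hcS
        _ ≤ _ := h1
    set μ : {μ : ι → ℝ // (∀ i, 0 ≤ μ i) ∧ ∑ i, μ i = 1} :=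
      ⟨fun i => lam i / S, fun i => div_nonneg (hlam_nonneg i) (le_of_lt hS0), by
        rw [← Finset.sum_div, ← hS, div_self (ne_of_gt hS0)]⟩ with hμ
    refine le_trans ?_ (le_ciSup hSupBd μ)
    exact le_ciInf fun x => hkey x.1 x.2
  · -- easy direction
    refine ciSup_le fun μ => le_ciInf fun x => ?_
    refine le_trans (ciInf_le (hbd μ) x) ?_
    exact stmt13_wavg_le_sup' _ _ _ _ (fun i _ => μ.2.1 i) μ.2.2

/-- Replacing the inner max over `D(u)` by a randomization: for
`w(γ1,γ2) = Σ_u γ2(u) max_{d ∈ D(u)} ⟨d, γ1⟩` with `B1 ⊆ ℝ^k` compact convex and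
`γ2` ranging over the simplex `Δ(U)`,
`min_{γ1} max_{γ2} w = max_{γ2} max_{e} min_{γ1} Σ_u Σ_{d ∈ D(u)} γ2(u) e(u)(d) ⟨d, γ1⟩`,
where `e` ranges over maps `U → Δ(∪_u D(u))` with `e(u)` supported on `D(u)`. -/
theorem stmt_13 {k : ℕ} {U : Type*} [Fintype U] [Nonempty U] [DecidableEq U]
    (B1 : Set (Fin k → ℝ)) (hB1c : IsCompact B1) (hB1v : Convex ℝ B1)
    (hB1n : B1.Nonempty)
    (D : U → Finset (Fin k → ℝ)) (hD : ∀ u, (D u).Nonempty) :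
    (⨅ γ1 : B1, ⨆ γ2 : {γ2 : U → ℝ // (∀ u, 0 ≤ γ2 u) ∧ ∑ u, γ2 u = 1},
        ∑ u, γ2.1 u * (D u).sup' (hD u) fun d => ∑ i, d i * γ1.1 i) =
      ⨆ γ2 : {γ2 : U → ℝ // (∀ u, 0 ≤ γ2 u) ∧ ∑ u, γ2 u = 1},
        ⨆ e : {e : U → (Fin k → ℝ) → ℝ //
            ∀ u, (∀ d, 0 ≤ e u d) ∧
              (∑ d ∈ Finset.univ.biUnion D, e u d) = 1 ∧
              ∀ d ∉ D u, e u d = 0},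
          ⨅ γ1 : B1,
            ∑ u, ∑ d ∈ D u, γ2.1 u * e.1 u d * ∑ i, d i * γ1.1 i := by
  classical
  haveI hB1ne : Nonempty B1 := hB1n.to_subtype
  obtain ⟨x0, hx0⟩ := hB1n
  set Φ : (Fin k → ℝ) → (Fin k → ℝ) → ℝ := fun d x => ∑ i, d i * x i with hΦdef
  set P : Finset ((_ : U) × (Fin k → ℝ)) := Finset.univ.sigma D with hPdef
  have hmemP : ∀ (u : U) (d : Fin k → ℝ), d ∈ D u →
      (⟨u, d⟩ : (_ : U) × (Fin k → ℝ)) ∈ P := fun u d hd =>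
    Finset.mem_sigma.mpr ⟨Finset.mem_univ u, hd⟩
  have hP : P.Nonempty :=
    ⟨⟨Classical.arbitrary U, (hD _).choose⟩, hmemP _ _ (hD _).choose_spec⟩
  haveI hPne : Nonempty ↥P := Finset.nonempty_coe_sort.mpr hP
  set v : ↥P → Fin k → ℝ := fun p => p.1.2 with hvdef
  set d0 : U → Fin k → ℝ := fun u => (hD u).choose with hd0def
  have hd0 : ∀ u, d0 u ∈ D u := fun u => (hD u).choose_spec
  have hDsub : ∀ u, D u ⊆ Finset.univ.biUnion D := fun u d hd =>
    Finset.mem_biUnion.mpr ⟨u, Finset.mem_univ u, hd⟩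
  haveI hΔ2ne : Nonempty {γ2 : U → ℝ // (∀ u, 0 ≤ γ2 u) ∧ ∑ u, γ2 u = 1} := by
    refine ⟨⟨fun u => if u = Classical.arbitrary U then 1 else 0,
      fun u => by positivity, by simp⟩⟩
  haveI hEene : Nonempty {e : U → (Fin k → ℝ) → ℝ //
      ∀ u, (∀ d, 0 ≤ e u d) ∧
        (∑ d ∈ Finset.univ.biUnion D, e u d) = 1 ∧ ∀ d ∉ D u, e u d = 0} := by
    refine ⟨⟨fun u d => if d = d0 u then 1 else 0, fun u => ⟨fun d => by positivity, ?_, ?_⟩⟩⟩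
    · rw [Finset.sum_ite_eq' (Finset.univ.biUnion D) (d0 u) (fun _ => (1:ℝ)),
        if_pos (hDsub u (hd0 u))]
    · intro d hdn
      exact if_neg fun h => hdn (by rw [h]; exact hd0 u)
  have hesum : ∀ e : {e : U → (Fin k → ℝ) → ℝ //
      ∀ u, (∀ d, 0 ≤ e u d) ∧
        (∑ d ∈ Finset.univ.biUnion D, e u d) = 1 ∧ ∀ d ∉ D u, e u d = 0},
      ∀ u, ∑ d ∈ D u, e.1 u d = 1 := by
    intro e u
    rw [Finset.sum_subset (hDsub u) (fun d _ hdn => (e.2 u).2.2 d hdn)]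
    exact (e.2 u).2.1
  have hpairsum : ∀ (γ2 : {γ2 : U → ℝ // (∀ u, 0 ≤ γ2 u) ∧ ∑ u, γ2 u = 1})
      (e : {e : U → (Fin k → ℝ) → ℝ //
        ∀ u, (∀ d, 0 ≤ e u d) ∧
          (∑ d ∈ Finset.univ.biUnion D, e u d) = 1 ∧ ∀ d ∉ D u, e u d = 0}),
      ∑ p ∈ P, γ2.1 p.1 * e.1 p.1 p.2 = 1 := by
    intro γ2 e
    rw [hPdef, Finset.sum_sigma]
    calc ∑ u, ∑ d ∈ D u, γ2.1 u * e.1 u d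
        = ∑ u, γ2.1 u * ∑ d ∈ D u, e.1 u d :=
          Finset.sum_congr rfl fun u _ => (Finset.mul_sum _ _ _).symm
      _ = 1 := by
          rw [Finset.sum_congr rfl fun u _ => by rw [hesum e u, mul_one]]
          exact γ2.2.2
  have hsupP : ∀ g : (_ : U) × (Fin k → ℝ) → ℝ,
      P.sup' hP g = Finset.univ.sup' Finset.univ_nonempty (fun i : ↥P => g i.1) := by
    intro g
    apply le_antisymm
    · exact Finset.sup'_le _ _ fun p hp =>
        Finset.le_sup' (fun i : ↥P => g i.1) (Finset.mem_univ (⟨p, hp⟩ : ↥P))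
    · exact Finset.sup'_le _ _ fun i _ => Finset.le_sup' g i.2
  set T0 : ℝ := Finset.univ.sup' Finset.univ_nonempty (fun i : ↥P => Φ (v i) x0) with hT0
  have hub : ∀ (γ2 : {γ2 : U → ℝ // (∀ u, 0 ≤ γ2 u) ∧ ∑ u, γ2 u = 1})
      (e : {e : U → (Fin k → ℝ) → ℝ //
        ∀ u, (∀ d, 0 ≤ e u d) ∧
          (∑ d ∈ Finset.univ.biUnion D, e u d) = 1 ∧ ∀ d ∉ D u, e u d = 0}),
      (⨅ x : B1, ∑ u, ∑ d ∈ D u, γ2.1 u * e.1 u d * Φ d x.1) ≤ T0 := by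
    intro γ2 e
    have hcont : Continuous fun x : Fin k → ℝ =>
        ∑ u, ∑ d ∈ D u, γ2.1 u * e.1 u d * Φ d x :=
      continuous_finset_sum _ fun u _ => continuous_finset_sum _ fun d _ =>
        continuous_const.mul (stmt13_cont d)
    refine le_trans (ciInf_le (stmt13_bddBelow hB1c hcont) ⟨x0, hx0⟩) ?_
    have heq : ∑ u, ∑ d ∈ D u, γ2.1 u * e.1 u d * Φ d x0
        = ∑ p ∈ P, (γ2.1 p.1 * e.1 p.1 p.2) * Φ p.2 x0 := by
      rw [hPdef, Finset.sum_sigma]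
    rw [heq, hT0, ← hsupP (fun p => Φ p.2 x0)]
    exact stmt13_wavg_le_sup' P hP _ _
      (fun p _ => mul_nonneg (γ2.2.1 _) ((e.2 _).1 _)) (hpairsum γ2 e)
  have hSub : ∀ μ : {μ : ↥P → ℝ // (∀ i, 0 ≤ μ i) ∧ ∑ i, μ i = 1},
      (⨅ x : B1, ∑ i, μ.1 i * Φ (v i) x.1) ≤ T0 := by
    intro μ
    have hcont : Continuous fun x : Fin k → ℝ => ∑ i, μ.1 i * Φ (v i) x :=
      continuous_finset_sum _ fun i _ => continuous_const.mul (stmt13_cont (v i))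
    refine le_trans (ciInf_le (stmt13_bddBelow hB1c hcont) ⟨x0, hx0⟩) ?_
    exact stmt13_wavg_le_sup' Finset.univ Finset.univ_nonempty μ.1 (fun i => Φ (v i) x0)
      (fun i _ => μ.2.1 i) μ.2.2
  have hSbd : BddAbove (Set.range fun μ : {μ : ↥P → ℝ // (∀ i, 0 ≤ μ i) ∧ ∑ i, μ i = 1} =>
      ⨅ x : B1, ∑ i, μ.1 i * Φ (v i) x.1) := by
    refine ⟨T0, ?_⟩; rintro _ ⟨μ, rfl⟩; exact hSub μ
  -- Step 1 : inner sup over γ2 equals sup' over pairs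
  have hstep1 : ∀ x : B1,
      (⨆ γ2 : {γ2 : U → ℝ // (∀ u, 0 ≤ γ2 u) ∧ ∑ u, γ2 u = 1},
        ∑ u, γ2.1 u * (D u).sup' (hD u) fun d => Φ d x.1)
      = Finset.univ.sup' Finset.univ_nonempty (fun i : ↥P => Φ (v i) x.1) := by
    intro x
    set M : U → ℝ := fun u => (D u).sup' (hD u) fun d => Φ d x.1 with hM
    have hMax : Finset.univ.sup' Finset.univ_nonempty M
        = Finset.univ.sup' Finset.univ_nonempty (fun i : ↥P => Φ (v i) x.1) := by
      apply le_antisymm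
      · refine Finset.sup'_le _ _ fun u _ => Finset.sup'_le _ _ fun d hd => ?_
        exact Finset.le_sup' (fun i : ↥P => Φ (v i) x.1)
          (Finset.mem_univ (⟨⟨u, d⟩, hmemP u d hd⟩ : ↥P))
      · refine Finset.sup'_le _ _ fun i _ => ?_
        obtain ⟨-, hd⟩ := Finset.mem_sigma.mp i.2
        exact le_trans (Finset.le_sup' (fun d => Φ d x.1) hd)
          (Finset.le_sup' M (Finset.mem_univ i.1.1))
    rw [← hMax]
    apply le_antisymm
    · exact ciSup_le fun γ2 =>
        stmt13_wavg_le_sup' _ _ γ2.1 M (fun u _ => γ2.2.1 u) γ2.2.2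
    · obtain ⟨u1, -, hu1⟩ := Finset.exists_mem_eq_sup' Finset.univ_nonempty M
      have hbdA : BddAbove (Set.range
          fun γ2 : {γ2 : U → ℝ // (∀ u, 0 ≤ γ2 u) ∧ ∑ u, γ2 u = 1} =>
            ∑ u, γ2.1 u * M u) := by
        refine ⟨Finset.univ.sup' Finset.univ_nonempty M, ?_⟩
        rintro _ ⟨γ2, rfl⟩
        exact stmt13_wavg_le_sup' _ _ γ2.1 M (fun u _ => γ2.2.1 u) γ2.2.2
      refine le_trans ?_ (le_ciSup hbdA
        (⟨fun u => if u = u1 then 1 else 0, fun u => by positivity, by simp⟩ :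
          {γ2 : U → ℝ // (∀ u, 0 ≤ γ2 u) ∧ ∑ u, γ2 u = 1}))
      have hval : ∑ u, (if u = u1 then (1:ℝ) else 0) * M u = M u1 := by simp
      rw [hu1, hval]
  calc (⨅ γ1 : B1, ⨆ γ2 : {γ2 : U → ℝ // (∀ u, 0 ≤ γ2 u) ∧ ∑ u, γ2 u = 1},
        ∑ u, γ2.1 u * (D u).sup' (hD u) fun d => ∑ i, d i * γ1.1 i)
      = ⨅ x : B1, Finset.univ.sup' Finset.univ_nonempty fun i : ↥P => ∑ j, v i j * x.1 j :=
        iInf_congr hstep1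
    _ = ⨆ μ : {μ : ↥P → ℝ // (∀ i, 0 ≤ μ i) ∧ ∑ i, μ i = 1},
          ⨅ x : B1, ∑ i, μ.1 i * ∑ j, v i j * x.1 j :=
        stmt13_core B1 hB1c hB1v ⟨x0, hx0⟩ v
    _ = _ := by
        haveI : Nonempty {μ : ↥P → ℝ // (∀ i, 0 ≤ μ i) ∧ ∑ i, μ i = 1} :=
          ⟨⟨fun i => if i = Classical.arbitrary ↥P then 1 else 0,
            fun i => by positivity, by simp⟩⟩
        apply le_antisymm
        · -- S ≤ RHS
          refine ciSup_le fun μ => ?_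
          set m : ((_ : U) × (Fin k → ℝ)) → ℝ :=
            fun p => if h : p ∈ P then μ.1 ⟨p, h⟩ else 0 with hm
          have hm0 : ∀ p, 0 ≤ m p := by
            intro p
            rw [hm]
            dsimp only
            split_ifs with h
            · exact μ.2.1 _
            · exact le_refl 0
          have hmP : ∀ p (hp : p ∈ P), m p = μ.1 ⟨p, hp⟩ := by
            intro p hp; rw [hm]; exact dif_pos hp
          have hmsum : ∑ u, ∑ d ∈ D u, m ⟨u, d⟩ = 1 := by
            have h1 : ∑ p ∈ P, m p = ∑ u, ∑ d ∈ D u, m ⟨u, d⟩ := by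
              rw [hPdef, Finset.sum_sigma]
            have h2 : ∑ p ∈ P, m p = ∑ i : ↥P, μ.1 i := by
              rw [← Finset.sum_coe_sort P m]
              exact Finset.sum_congr rfl fun i _ => by rw [hmP i.1 i.2]
            rw [← h1, h2, μ.2.2]
          set γ2v : U → ℝ := fun u => ∑ d ∈ D u, m ⟨u, d⟩ with hγ2v
          have hγ2nn : ∀ u, 0 ≤ γ2v u := fun u => Finset.sum_nonneg fun d _ => hm0 _
          set ev : U → (Fin k → ℝ) → ℝ := fun u d =>
            if γ2v u = 0 then (if d = d0 u then 1 else 0) else m ⟨u, d⟩ / γ2v u with hev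
          have hmnotin : ∀ u d, d ∉ D u → m ⟨u, d⟩ = 0 := by
            intro u d hdn
            rw [hm]
            exact dif_neg fun hp => hdn (Finset.mem_sigma.mp hp).2
          have hevnn : ∀ u d, 0 ≤ ev u d := by
            intro u d
            rw [hev]
            dsimp only
            split_ifs with h1 h2
            · exact zero_le_one
            · exact le_refl 0
            · exact div_nonneg (hm0 _) (hγ2nn u)
          have hevsupp : ∀ u d, d ∉ D u → ev u d = 0 := by
            intro u d hdn
            have hne : d ≠ d0 u := by intro h; rw [h] at hdn; exact hdn (hd0 u)
            have hmz : m ⟨u, d⟩ = 0 := hmnotin u d hdn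
            rw [hev]
            dsimp only
            by_cases h1 : γ2v u = 0
            · rw [if_pos h1, if_neg hne]
            · rw [if_neg h1, hmz, zero_div]
          have hevsum : ∀ u, ∑ d ∈ Finset.univ.biUnion D, ev u d = 1 := by
            intro u
            by_cases hz : γ2v u = 0
            · have : ∀ d, ev u d = if d = d0 u then 1 else 0 := fun d => by
                rw [hev]; dsimp only; rw [if_pos hz]
              rw [Finset.sum_congr rfl fun d _ => this d,
                Finset.sum_ite_eq' (Finset.univ.biUnion D) (d0 u) (fun _ => (1:ℝ)),
                if_pos (hDsub u (hd0 u))]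
            · rw [← Finset.sum_subset (hDsub u) (fun d _ hdn => hevsupp u d hdn)]
              have : ∀ d ∈ D u, ev u d = m ⟨u, d⟩ / γ2v u := fun d _ => by
                rw [hev]; dsimp only; rw [if_neg hz]
              rw [Finset.sum_congr rfl this, ← Finset.sum_div]
              exact div_self hz
          have hprod : ∀ u, ∀ d ∈ D u, γ2v u * ev u d = m ⟨u, d⟩ := by
            intro u d hd
            by_cases hz : γ2v u = 0
            · have hmz : m ⟨u, d⟩ = 0 := by
                have hsz : ∑ d ∈ D u, m ⟨u, d⟩ = 0 := hz
                exact (Finset.sum_eq_zero_iff_of_nonneg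
                  (fun d _ => hm0 (⟨u, d⟩ : (_ : U) × (Fin k → ℝ)))).mp hsz d hd
              rw [hz, zero_mul, hmz]
            · have : ev u d = m ⟨u, d⟩ / γ2v u := by
                rw [hev]; dsimp only; rw [if_neg hz]
              rw [this, mul_comm, div_mul_cancel₀ _ hz]
          set γ2 : {γ2 : U → ℝ // (∀ u, 0 ≤ γ2 u) ∧ ∑ u, γ2 u = 1} :=
            ⟨γ2v, hγ2nn, hmsum⟩ with hγ2
          set e : {e : U → (Fin k → ℝ) → ℝ //
              ∀ u, (∀ d, 0 ≤ e u d) ∧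
                (∑ d ∈ Finset.univ.biUnion D, e u d) = 1 ∧ ∀ d ∉ D u, e u d = 0} :=
            ⟨ev, fun u => ⟨hevnn u, hevsum u, hevsupp u⟩⟩ with he
          have heq : ∀ x : B1, ∑ i, μ.1 i * ∑ j, v i j * x.1 j
              = ∑ u, ∑ d ∈ D u, γ2.1 u * e.1 u d * ∑ i, d i * x.1 i := by
            intro x
            have h1 : ∑ u, ∑ d ∈ D u, γ2.1 u * e.1 u d * Φ d x.1
                = ∑ u, ∑ d ∈ D u, m ⟨u, d⟩ * Φ d x.1 :=
              Finset.sum_congr rfl fun u _ => Finset.sum_congr rfl fun d hd => by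
                rw [hγ2, he]; dsimp only; rw [hprod u d hd]
            have h2 : ∑ p ∈ P, m p * Φ p.2 x.1 = ∑ u, ∑ d ∈ D u, m ⟨u, d⟩ * Φ d x.1 := by
              rw [hPdef, Finset.sum_sigma]
            have h3 : ∑ p ∈ P, m p * Φ p.2 x.1 = ∑ i : ↥P, μ.1 i * Φ (v i) x.1 := by
              rw [← Finset.sum_coe_sort P (fun p => m p * Φ p.2 x.1)]
              exact Finset.sum_congr rfl fun i _ => by rw [hmP i.1 i.2]
            rw [h1, ← h2, h3]
          rw [iInf_congr heq]
          have hle1 : (⨅ x : B1, ∑ u, ∑ d ∈ D u, γ2.1 u * e.1 u d * ∑ i, d i * x.1 i)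
              ≤ ⨆ e' : {e : U → (Fin k → ℝ) → ℝ //
                  ∀ u, (∀ d, 0 ≤ e u d) ∧
                    (∑ d ∈ Finset.univ.biUnion D, e u d) = 1 ∧ ∀ d ∉ D u, e u d = 0},
                ⨅ x : B1, ∑ u, ∑ d ∈ D u, γ2.1 u * e'.1 u d * ∑ i, d i * x.1 i := by
            refine le_ciSup (f := fun e' : {e : U → (Fin k → ℝ) → ℝ //
                ∀ u, (∀ d, 0 ≤ e u d) ∧
                  (∑ d ∈ Finset.univ.biUnion D, e u d) = 1 ∧ ∀ d ∉ D u, e u d = 0} =>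
              ⨅ x : B1, ∑ u, ∑ d ∈ D u, γ2.1 u * e'.1 u d * ∑ i, d i * x.1 i)
              ⟨T0, ?_⟩ e
            rintro _ ⟨e', rfl⟩
            exact hub γ2 e'
          refine le_trans hle1 ?_
          refine le_ciSup (f := fun γ2' : {γ2 : U → ℝ // (∀ u, 0 ≤ γ2 u) ∧ ∑ u, γ2 u = 1} =>
              ⨆ e' : {e : U → (Fin k → ℝ) → ℝ //
                ∀ u, (∀ d, 0 ≤ e u d) ∧
                  (∑ d ∈ Finset.univ.biUnion D, e u d) = 1 ∧ ∀ d ∉ D u, e u d = 0},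
              ⨅ x : B1, ∑ u, ∑ d ∈ D u, γ2'.1 u * e'.1 u d * ∑ i, d i * x.1 i)
            ⟨T0, ?_⟩ γ2
          rintro _ ⟨γ2', rfl⟩
          exact ciSup_le fun e' => hub γ2' e'
        · -- RHS ≤ S
          refine ciSup_le fun γ2 => ciSup_le fun e => ?_
          have hμ : (∀ i : ↥P, 0 ≤ γ2.1 i.1.1 * e.1 i.1.1 i.1.2) ∧
              ∑ i : ↥P, γ2.1 i.1.1 * e.1 i.1.1 i.1.2 = 1 := by
            constructor
            · exact fun i => mul_nonneg (γ2.2.1 _) ((e.2 _).1 _)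
            · rw [Finset.sum_coe_sort P (fun p => γ2.1 p.1 * e.1 p.1 p.2)]
              exact hpairsum γ2 e
          set μ : {μ : ↥P → ℝ // (∀ i, 0 ≤ μ i) ∧ ∑ i, μ i = 1} :=
            ⟨fun i => γ2.1 i.1.1 * e.1 i.1.1 i.1.2, hμ⟩ with hμdef
          have heq : ∀ x : B1, ∑ u, ∑ d ∈ D u, γ2.1 u * e.1 u d * ∑ i, d i * x.1 i
              = ∑ i, μ.1 i * Φ (v i) x.1 := by
            intro x
            rw [hμdef]
            rw [Finset.sum_coe_sort P (fun p => γ2.1 p.1 * e.1 p.1 p.2 * Φ p.2 x.1)]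
            rw [hPdef, Finset.sum_sigma]
          rw [iInf_congr heq]
          exact le_ciSup hSbd μ
end

section
/- In the game with complete information on one side (player 1 knows (X_{1:t}, Y^2_{1:t}, U^{1:2}_{1:t-1}), player 2 knows (Y^2_{1:t}, U^2_{1:t-1})), for any behavioral strategy g^1 of player 1 there exists a behavioral strategy ḡ^1 that at each time t depends only on (X_t, I^2_t) such that for every strategy g^2 of player 2, the joint distribution of (X_t, U^1_t, U^2_t, I^2_t) at every time t is the same under (g^1, g^2) and (ḡ^1, g^2); consequently J(ḡ^1, g^2) = J(g^1, g^2) for all g^2. -/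
/-!
The law of a play is a product of one-step kernels (`pathWeight`). Summing out the steps after
`t`, the probability of `{X_t = x, U^1_t = u, U^2_t = v, I^2_t = i}` is a factor depending only
on `g2`, `i` and `v`, times a weight `jointWeight g1 t i x u` in which `g2` does not occur.
Normalizing this weight in `u` gives `ḡ¹_t(x, i)`. Under `ḡ¹` the joint weight is
`ḡ¹_t(x, i)(u)` times the weight of the state `x`, and the state weight at `t + 1` is obtained
from the joint weights at `t` through `trans` and `obs` alone; so by induction on `t` the joint
weights of `g1` and `ḡ¹` agree. The expected cost is a sum over `t` of expectations of functions
of `(X_t, U^1_t, U^2_t, I^2_t)`, hence agrees as well.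
-/

/-- Behavioral strategy of player 1 in the one-sided-information game: at time
`t` it maps the full history `(X_{0:t}, Y^2_{0:t}, U^1_{0:t-1}, U^2_{0:t-1})` to
a distribution over `U1`. -/
def Strat1 (X U1 U2 Y : Type*) : Type _ :=
  (t : ℕ) → (Fin (t + 1) → X) → (Fin (t + 1) → Y) → (Fin t → U1) →
    (Fin t → U2) → U1 → ℝ

/-- Behavioral strategy of player 2: at time `t` it maps its information
`I^2_t = (Y^2_{0:t}, U^2_{0:t-1})` to a distribution over `U2`. -/
def Strat2 (U2 Y : Type*) : Type _ :=
  (t : ℕ) → (Fin (t + 1) → Y) → (Fin t → U2) → U2 → ℝ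

/-- `g1` is a valid behavioral strategy (pointwise nonnegative distributions). -/
def valid1 {X U1 U2 Y : Type*} [Fintype U1] (g1 : Strat1 X U1 U2 Y) : Prop :=
  ∀ t xs ys u1s u2s, (∀ u, 0 ≤ g1 t xs ys u1s u2s u) ∧
    ∑ u, g1 t xs ys u1s u2s u = 1

/-- `g2` is a valid behavioral strategy. -/
def valid2 {U2 Y : Type*} [Fintype U2] (g2 : Strat2 U2 Y) : Prop :=
  ∀ t ys u2s, (∀ u, 0 ≤ g2 t ys u2s u) ∧ ∑ u, g2 t ys u2s u = 1

/-- State prefix `X_{0:t}` of a trajectory. -/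
def xpre {X U1 U2 Y : Type*} {T : ℕ} (ω : Fin T → X × U1 × U2 × Y) (t : Fin T) :
    Fin (t.1 + 1) → X :=
  fun s => (ω ⟨s.1, lt_of_lt_of_le s.isLt (Nat.succ_le_of_lt t.isLt)⟩).1

/-- Observation prefix `Y^2_{0:t}` of a trajectory. -/
def ypre {X U1 U2 Y : Type*} {T : ℕ} (ω : Fin T → X × U1 × U2 × Y) (t : Fin T) :
    Fin (t.1 + 1) → Y :=
  fun s => (ω ⟨s.1, lt_of_lt_of_le s.isLt (Nat.succ_le_of_lt t.isLt)⟩).2.2.2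

/-- Action prefix `U^1_{0:t-1}` of a trajectory. -/
def u1pre {X U1 U2 Y : Type*} {T : ℕ} (ω : Fin T → X × U1 × U2 × Y) (t : Fin T) :
    Fin t.1 → U1 :=
  fun s => (ω ⟨s.1, lt_trans s.isLt t.isLt⟩).2.1

/-- Action prefix `U^1_{0:t}` of a trajectory. -/
def u1preInc {X U1 U2 Y : Type*} {T : ℕ} (ω : Fin T → X × U1 × U2 × Y)
    (t : Fin T) : Fin (t.1 + 1) → U1 :=
  fun s => (ω ⟨s.1, lt_of_lt_of_le s.isLt (Nat.succ_le_of_lt t.isLt)⟩).2.1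

/-- Action prefix `U^2_{0:t-1}` of a trajectory. -/
def u2pre {X U1 U2 Y : Type*} {T : ℕ} (ω : Fin T → X × U1 × U2 × Y) (t : Fin T) :
    Fin t.1 → U2 :=
  fun s => (ω ⟨s.1, lt_trans s.isLt t.isLt⟩).2.2.1

/-- Predecessor of a nonzero index. -/
def predIdx {T : ℕ} (t : Fin T) : Fin T :=
  ⟨t.1 - 1, lt_of_le_of_lt (Nat.sub_le _ _) t.isLt⟩

/-- The probability (density) of a length-`T` trajectory
`ω = (X_t, U^1_t, U^2_t, Y^2_t)_{t < T}` under the dynamics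
`X_{t+1} ~ trans(X_t, U^1_t, U^2_t)`, `Y^2_{t+1} ~ obs(X_{t+1}, U^1_t, U^2_t)`
(with initial kernels `init`, `inobs`) and the behavioral strategy profile
`(g1, g2)`. -/
def dens {X U1 U2 Y : Type*} {T : ℕ}
    (init : X → ℝ) (inobs : X → Y → ℝ)
    (trans : X → U1 → U2 → X → ℝ) (obs : X → U1 → U2 → Y → ℝ)
    (g1 : Strat1 X U1 U2 Y) (g2 : Strat2 U2 Y)
    (ω : Fin T → X × U1 × U2 × Y) : ℝ :=
  (∏ t : Fin T,
      if t.1 = 0 then init (ω t).1 * inobs (ω t).1 (ω t).2.2.2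
      else
        trans (ω (predIdx t)).1 (ω (predIdx t)).2.1 (ω (predIdx t)).2.2.1
            (ω t).1 *
          obs (ω t).1 (ω (predIdx t)).2.1 (ω (predIdx t)).2.2.1 (ω t).2.2.2) *
    (∏ t : Fin T,
      g1 t.1 (xpre ω t) (ypre ω t) (u1pre ω t) (u2pre ω t) (ω t).2.1) *
    ∏ t : Fin T, g2 t.1 (ypre ω t) (u2pre ω t) (ω t).2.2.1

/-- Embed a strategy that depends only on `(X_t, I^2_t)` into a full-information
strategy of player 1. -/
def embed1 {X U1 U2 Y : Type*}
    (g : (t : ℕ) → X → (Fin (t + 1) → Y) → (Fin t → U2) → U1 → ℝ) :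
    Strat1 X U1 U2 Y :=
  fun t xs ys _ u2s => g t (xs (Fin.last t)) ys u2s

theorem Fin.take_snoc_of_le {α : Type*} {m n : ℕ} (h : m ≤ n) (σ : Fin n → α) (e : α) :
    Fin.take m (h.trans n.le_succ) (Fin.snoc σ e : Fin (n + 1) → α) = Fin.take m h σ := by
  rw [← Fin.take_init, Fin.init_snoc]

theorem Fintype.sum_pi_fin_succ {α M : Type*} [Fintype α] [AddCommMonoid M] {n : ℕ}
    (f : (Fin (n + 1) → α) → M) :
    ∑ ω, f ω = ∑ σ : Fin n → α, ∑ e, f (Fin.snoc σ e) := by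
  rw [← Fintype.sum_equiv (Fin.snocEquiv fun _ => α) (fun p => f (Fin.snoc p.2 p.1)) f
    fun _ => rfl, Fintype.sum_prod_type, Finset.sum_comm]

theorem Fin.snoc_eq_iff {α : Type*} {n : ℕ} {a : Fin n → α} {b : α} {c : Fin (n + 1) → α} :
    Fin.snoc a b = c ↔ a = Fin.init c ∧ b = c (Fin.last n) := by
  conv_lhs => rw [← Fin.snoc_init_self c]
  exact Fin.snoc_inj

theorem Fintype.sum_ite_snd_snd_eq {A B C M : Type*} [Fintype A] [Fintype B] [Fintype C]
    [DecidableEq C] [AddCommMonoid M] (c : C) (f : A × B × C → M) :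
    ∑ e, (if e.2.2 = c then f e else 0) = ∑ b : A × B, f (b.1, b.2, c) := by
  simp only [Fintype.sum_prod_type, Finset.sum_ite_eq', Finset.mem_univ, if_true]

section PathWeight

variable {α : Type*}

/-- The weight of a path `ω` when `Φ k p e` is the weight of `e` as the `k`-th entry after the
past `p`. -/
def pathWeight (Φ : (k : ℕ) → (Fin k → α) → α → ℝ) {n : ℕ} (ω : Fin n → α) : ℝ :=
  ∏ t : Fin n, Φ t (Fin.take t t.isLt.le ω) (ω t)

variable (Φ Ψ : (k : ℕ) → (Fin k → α) → α → ℝ)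

theorem pathWeight_snoc {n : ℕ} (σ : Fin n → α) (e : α) :
    pathWeight Φ (Fin.snoc σ e : Fin (n + 1) → α) = pathWeight Φ σ * Φ n σ e := by
  simp only [pathWeight, Fin.prod_univ_castSucc, Fin.val_castSucc, Fin.snoc_castSucc,
    Fin.val_last, Fin.snoc_last]
  congr 1
  · exact Finset.prod_congr rfl fun t _ => by rw [Fin.take_snoc_of_le t.isLt.le]
  · rw [Fin.take_snoc_of_le le_rfl, Fin.take_eq_self]

theorem pathWeight_mul {n : ℕ} (ω : Fin n → α) :
    pathWeight (fun k p e => Φ k p e * Ψ k p e) ω = pathWeight Φ ω * pathWeight Ψ ω :=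
  Finset.prod_mul_distrib

theorem pathWeight_comp {β : Type*} (Θ : (k : ℕ) → (Fin k → β) → β → ℝ) (π : α → β) {n : ℕ}
    (ω : Fin n → α) :
    pathWeight (fun k p e => Θ k (π ∘ p) (π e)) ω = pathWeight Θ (π ∘ ω) :=
  rfl

theorem pathWeight_nonneg (hΦ : ∀ k p e, 0 ≤ Φ k p e) {n : ℕ} (ω : Fin n → α) :
    0 ≤ pathWeight Φ ω :=
  Finset.prod_nonneg fun _ _ => hΦ _ _ _

variable [Fintype α]

theorem sum_pathWeight_snoc (hΦ : ∀ k p, ∑ e, Φ k p e = 1) {n : ℕ} (σ : Fin n → α) :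
    ∑ e, pathWeight Φ (Fin.snoc σ e : Fin (n + 1) → α) = pathWeight Φ σ := by
  simp only [pathWeight_snoc, ← Finset.mul_sum, hΦ, mul_one]

theorem sum_mul_pathWeight_take (hΦ : ∀ k p, ∑ e, Φ k p e = 1) {k n : ℕ} (h : k ≤ n)
    (f : (Fin k → α) → ℝ) :
    ∑ ω : Fin n → α, f (Fin.take k h ω) * pathWeight Φ ω =
      ∑ σ : Fin k → α, f σ * pathWeight Φ σ := by
  induction n, h using Nat.le_induction with
  | base => simp only [Fin.take_eq_self]
  | succ n hkn ih =>
    rw [Fintype.sum_pi_fin_succ, ← ih]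
    refine Finset.sum_congr rfl fun σ _ => ?_
    simp only [Fin.take_snoc_of_le hkn, ← Finset.mul_sum, sum_pathWeight_snoc Φ hΦ]

end PathWeight

section NormalizedWeight

variable {β : Type*} [Fintype β]

noncomputable def normalizedWeight (w : β → ℝ) (b : β) : ℝ :=
  if ∑ b', w b' = 0 then (Fintype.card β : ℝ)⁻¹ else w b / ∑ b', w b'

theorem normalizedWeight_nonneg {w : β → ℝ} (hw : ∀ b, 0 ≤ w b) (b : β) :
    0 ≤ normalizedWeight w b := by
  unfold normalizedWeight
  split_ifs
  · positivity
  · exact div_nonneg (hw b) (Finset.sum_nonneg fun b _ => hw b)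

theorem sum_normalizedWeight [Nonempty β] (w : β → ℝ) : ∑ b, normalizedWeight w b = 1 := by
  unfold normalizedWeight
  split_ifs with h
  · simp
  · rw [← Finset.sum_div, div_self h]

theorem normalizedWeight_mul_sum {w : β → ℝ} (hw : ∀ b, 0 ≤ w b) (b : β) :
    normalizedWeight w b * ∑ b', w b' = w b := by
  unfold normalizedWeight
  split_ifs with h
  · rw [h, mul_zero, (Finset.sum_eq_zero_iff_of_nonneg fun b _ => hw b).1 h b (Finset.mem_univ b)]
  · exact div_mul_cancel₀ _ h

end NormalizedWeight

theorem sum_mul_comp_eq_of_sum_fiber_eq {Ω B R : Type*} [Fintype Ω] [Fintype B] [DecidableEq B]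
    [NonUnitalNonAssocSemiring R] (κ : Ω → B) {μ ν : Ω → R}
    (h : ∀ b, ∑ ω, (if κ ω = b then μ ω else 0) = ∑ ω, (if κ ω = b then ν ω else 0))
    (f : B → R) :
    ∑ ω, μ ω * f (κ ω) = ∑ ω, ν ω * f (κ ω) := by
  have fiber : ∀ m : Ω → R, ∑ ω, m ω * f (κ ω) = ∑ b, (∑ ω, if κ ω = b then m ω else 0) * f b := by
    intro m
    rw [← Finset.sum_fiberwise Finset.univ κ]
    refine Finset.sum_congr rfl fun b _ => ?_
    rw [← Finset.sum_filter, Finset.sum_mul]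
    exact Finset.sum_congr rfl fun ω hω => by rw [(Finset.mem_filter.1 hω).2]
  simp only [fiber, h]

section Game

variable {X U1 U2 Y : Type*}
  (init : X → ℝ) (inobs : X → Y → ℝ)
  (trans : X → U1 → U2 → X → ℝ) (obs : X → U1 → U2 → Y → ℝ)

def dynKernel : (k : ℕ) → (Fin k → X × U1 × U2 × Y) → X → Y → ℝ
  | 0, _, x, y => init x * inobs x y
  | k + 1, p, x, y =>
    trans (p (Fin.last k)).1 (p (Fin.last k)).2.1 (p (Fin.last k)).2.2.1 x *
      obs x (p (Fin.last k)).2.1 (p (Fin.last k)).2.2.1 y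

def stratKernel1 (g1 : Strat1 X U1 U2 Y) (k : ℕ) (p : Fin k → X × U1 × U2 × Y) (x : X)
    (u : U1) (y : Y) : ℝ :=
  g1 k (Fin.snoc (Prod.fst ∘ p) x) (Fin.snoc ((·.2.2.2) ∘ p) y) ((·.2.1) ∘ p) ((·.2.2.1) ∘ p) u

def stratKernel2 (g2 : Strat2 U2 Y) (k : ℕ) (p : Fin k → U2 × Y) (e : U2 × Y) : ℝ :=
  g2 k (Fin.snoc (Prod.snd ∘ p) e.2) (Prod.fst ∘ p) e.1

def kernel1 (g1 : Strat1 X U1 U2 Y) (k : ℕ) (p : Fin k → X × U1 × U2 × Y)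
    (e : X × U1 × U2 × Y) : ℝ :=
  dynKernel init inobs trans obs k p e.1 e.2.2.2 * stratKernel1 g1 k p e.1 e.2.1 e.2.2.2

variable {init inobs trans obs}

theorem dens_eq_pathWeight {T : ℕ} (g1 : Strat1 X U1 U2 Y) (g2 : Strat2 U2 Y)
    (ω : Fin T → X × U1 × U2 × Y) :
    dens init inobs trans obs g1 g2 ω =
      pathWeight (fun k p e => kernel1 init inobs trans obs g1 k p e *
        stratKernel2 g2 k ((·.2.2) ∘ p) e.2.2) ω := by
  have hsnoc : ∀ t : Fin T, Fin.take (t + 1) t.isLt ω = Fin.snoc (Fin.take t t.isLt.le ω) (ω t) :=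
    fun t => Fin.take_succ_eq_snoc _ t.isLt ω
  have hx : ∀ t, xpre ω t = Fin.snoc (Prod.fst ∘ Fin.take t t.isLt.le ω) (ω t).1 := fun t =>
    (congrArg (Prod.fst ∘ ·) (hsnoc t)).trans (Fin.comp_snoc _ _ _)
  have hy : ∀ t, ypre ω t = Fin.snoc ((·.2.2.2) ∘ Fin.take t t.isLt.le ω) (ω t).2.2.2 :=
    fun t => (congrArg ((fun e : X × U1 × U2 × Y => e.2.2.2) ∘ ·) (hsnoc t)).trans
      (Fin.comp_snoc _ _ _)
  have hstep : ∀ t : Fin T, (if t.1 = 0 then init (ω t).1 * inobs (ω t).1 (ω t).2.2.2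
      else trans (ω (predIdx t)).1 (ω (predIdx t)).2.1 (ω (predIdx t)).2.2.1 (ω t).1 *
        obs (ω t).1 (ω (predIdx t)).2.1 (ω (predIdx t)).2.2.1 (ω t).2.2.2) =
      dynKernel init inobs trans obs t (Fin.take t t.isLt.le ω) (ω t).1 (ω t).2.2.2 := by
    rintro ⟨_ | k, hk⟩ <;> rfl
  simp only [dens, kernel1, stratKernel1, stratKernel2, pathWeight, hstep, hx, hy,
    Finset.prod_mul_distrib]
  rfl

theorem ypre_snoc_last {n : ℕ} (p : Fin n → X × U1 × U2 × Y) (e : X × U1 × U2 × Y) :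
    ypre (Fin.snoc p e : Fin (n + 1) → _) (Fin.last n) = Fin.snoc ((·.2.2.2) ∘ p) e.2.2.2 :=
  Fin.comp_snoc (fun e : X × U1 × U2 × Y => e.2.2.2) p e

theorem u2pre_snoc_last {n : ℕ} (p : Fin n → X × U1 × U2 × Y) (e : X × U1 × U2 × Y) :
    u2pre (Fin.snoc p e : Fin (n + 1) → _) (Fin.last n) = (·.2.2.1) ∘ p :=
  funext fun i => congrArg (·.2.2.1) (Fin.snoc_castSucc (α := fun _ => X × U1 × U2 × Y) e p i)

theorem dynKernel_nonneg (hinit : ∀ x, 0 ≤ init x) (hinobs : ∀ x y, 0 ≤ inobs x y)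
    (htrans : ∀ x u1 u2 x', 0 ≤ trans x u1 u2 x') (hobs : ∀ x u1 u2 y, 0 ≤ obs x u1 u2 y)
    (k : ℕ) (p : Fin k → X × U1 × U2 × Y) (x : X) (y : Y) :
    0 ≤ dynKernel init inobs trans obs k p x y := by
  cases k
  · exact mul_nonneg (hinit _) (hinobs _ _)
  · exact mul_nonneg (htrans _ _ _ _) (hobs _ _ _ _)

theorem sum_dynKernel [Fintype X] [Fintype Y] (hinit : ∑ x, init x = 1)
    (hinobs : ∀ x, ∑ y, inobs x y = 1) (htrans : ∀ x u1 u2, ∑ x', trans x u1 u2 x' = 1)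
    (hobs : ∀ x u1 u2, ∑ y, obs x u1 u2 y = 1) (k : ℕ) (p : Fin k → X × U1 × U2 × Y) :
    ∑ x, ∑ y, dynKernel init inobs trans obs k p x y = 1 := by
  cases k <;> simp only [dynKernel, ← Finset.mul_sum, hinobs, hobs, mul_one, hinit, htrans]

theorem valid1_embed1 [Fintype U1] {h : (t : ℕ) → X → (Fin (t + 1) → Y) → (Fin t → U2) → U1 → ℝ}
    (hh : ∀ t x ys u2s, (∀ u, 0 ≤ h t x ys u2s u) ∧ ∑ u, h t x ys u2s u = 1) :
    valid1 (embed1 h) :=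
  fun t _ ys _ u2s => hh t _ ys u2s

end Game

section JointWeight

variable {X U1 U2 Y : Type*} [DecidableEq U2] [DecidableEq Y]
  (init : X → ℝ) (inobs : X → Y → ℝ)
  (trans : X → U1 → U2 → X → ℝ) (obs : X → U1 → U2 → Y → ℝ)

/-- Unnormalized probability that `(X_t, U^1_t) = (x, u)` and `I^2_t = (ys, u2s)`, with the
factors of player 2's strategy removed. -/
def jointWeight [Fintype X] [Fintype U1] [Fintype U2] [Fintype Y] (g1 : Strat1 X U1 U2 Y)
    (t : ℕ) (ys : Fin (t + 1) → Y) (u2s : Fin t → U2) (x : X) (u : U1) : ℝ :=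
  ∑ p : Fin t → X × U1 × U2 × Y,
    if (·.2.2.2) ∘ p = Fin.init ys ∧ (·.2.2.1) ∘ p = u2s then
      pathWeight (kernel1 init inobs trans obs g1) p *
        (dynKernel init inobs trans obs t p x (ys (Fin.last t)) *
          stratKernel1 g1 t p x u (ys (Fin.last t)))
    else 0

def stateWeight [Fintype X] [Fintype U1] [Fintype U2] [Fintype Y] (g1 : Strat1 X U1 U2 Y)
    (t : ℕ) (ys : Fin (t + 1) → Y) (u2s : Fin t → U2) (x : X) : ℝ :=
  ∑ p : Fin t → X × U1 × U2 × Y,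
    if (·.2.2.2) ∘ p = Fin.init ys ∧ (·.2.2.1) ∘ p = u2s then
      pathWeight (kernel1 init inobs trans obs g1) p *
        dynKernel init inobs trans obs t p x (ys (Fin.last t))
    else 0

/-- `ḡ¹`: the conditional law of `U^1_t` given `(X_t, I^2_t)` under `g1` (uniform where the
condition has probability zero). -/
noncomputable def condStrat [Fintype X] [Fintype U1] [Fintype U2] [Fintype Y]
    (g1 : Strat1 X U1 U2 Y) :
    (t : ℕ) → X → (Fin (t + 1) → Y) → (Fin t → U2) → U1 → ℝ :=
  fun t x ys u2s => normalizedWeight (jointWeight init inobs trans obs g1 t ys u2s x)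

variable [Fintype X] [Fintype U1] [Fintype U2] [Fintype Y] {init inobs trans obs}

theorem sum_jointWeight {g1 : Strat1 X U1 U2 Y} (hg1 : valid1 g1) (t : ℕ)
    (ys : Fin (t + 1) → Y) (u2s : Fin t → U2) (x : X) :
    ∑ u, jointWeight init inobs trans obs g1 t ys u2s x u =
      stateWeight init inobs trans obs g1 t ys u2s x := by
  unfold jointWeight stateWeight
  rw [Finset.sum_comm]
  refine Finset.sum_congr rfl fun p _ => ?_
  split_ifs
  · simp only [← Finset.mul_sum, stratKernel1, (hg1 _ _ _ _ _).2, mul_one]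
  · exact Finset.sum_const_zero

theorem jointWeight_embed1 (h : (t : ℕ) → X → (Fin (t + 1) → Y) → (Fin t → U2) → U1 → ℝ)
    (t : ℕ) (ys : Fin (t + 1) → Y) (u2s : Fin t → U2) (x : X) (u : U1) :
    jointWeight init inobs trans obs (embed1 h) t ys u2s x u =
      h t x ys u2s u * stateWeight init inobs trans obs (embed1 h) t ys u2s x := by
  unfold jointWeight stateWeight
  rw [Finset.mul_sum]
  refine Finset.sum_congr rfl fun p _ => ?_
  split_ifs with hp
  · simp only [stratKernel1, embed1, Fin.snoc_last, hp.1, hp.2, Fin.snoc_init_self]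
    ring
  · rw [mul_zero]

theorem stateWeight_zero (g1 : Strat1 X U1 U2 Y) (ys : Fin 1 → Y) (u2s : Fin 0 → U2) (x : X) :
    stateWeight init inobs trans obs g1 0 ys u2s x = init x * inobs x (ys 0) := by
  simp [stateWeight, pathWeight, dynKernel, Subsingleton.elim _ u2s,
    Subsingleton.elim _ (Fin.init ys)]

theorem stateWeight_succ (g1 : Strat1 X U1 U2 Y) (k : ℕ) (ys : Fin (k + 2) → Y)
    (u2s : Fin (k + 1) → U2) (x : X) :
    stateWeight init inobs trans obs g1 (k + 1) ys u2s x =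
      ∑ b : X × U1, jointWeight init inobs trans obs g1 k (Fin.init ys) (Fin.init u2s) b.1 b.2 *
        (trans b.1 b.2 (u2s (Fin.last k)) x *
          obs x b.2 (u2s (Fin.last k)) (ys (Fin.last (k + 1)))) := by
  unfold stateWeight jointWeight
  simp only [Finset.sum_mul]
  rw [Fintype.sum_pi_fin_succ, Finset.sum_comm (s := (Finset.univ : Finset (X × U1)))]
  refine Finset.sum_congr rfl fun p _ => ?_
  have hcond : ∀ e : X × U1 × U2 × Y,
      ((·.2.2.2) ∘ (Fin.snoc p e : Fin (k + 1) → _) = Fin.init ys ∧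
        (·.2.2.1) ∘ (Fin.snoc p e : Fin (k + 1) → _) = u2s) ↔
      e.2.2 = (u2s (Fin.last k), Fin.init ys (Fin.last k)) ∧
        ((·.2.2.2) ∘ p = Fin.init (Fin.init ys) ∧
          (·.2.2.1) ∘ p = Fin.init u2s) := by
    intro e
    rw [Fin.comp_snoc, Fin.comp_snoc, Fin.snoc_eq_iff, Fin.snoc_eq_iff, Prod.ext_iff]
    tauto
  rw [Finset.sum_congr rfl fun e _ => (if_congr (hcond e) rfl rfl).trans (ite_and _ _ _ _)]
  rw [Fintype.sum_ite_snd_snd_eq]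
  refine Finset.sum_congr rfl fun b _ => ?_
  split_ifs
  · simp only [pathWeight_snoc, kernel1, dynKernel.eq_2, Fin.snoc_last, mul_assoc]
  · rw [zero_mul]

theorem jointWeight_nonneg (hdyn : ∀ k p x y, 0 ≤ dynKernel init inobs trans obs k p x y)
    {g1 : Strat1 X U1 U2 Y} (hg1 : valid1 g1) (t : ℕ) (ys : Fin (t + 1) → Y)
    (u2s : Fin t → U2) (x : X) (u : U1) :
    0 ≤ jointWeight init inobs trans obs g1 t ys u2s x u := by
  have hstrat : ∀ k p x u y, 0 ≤ stratKernel1 g1 k p x u y := fun _ _ _ _ _ => (hg1 _ _ _ _ _).1 _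
  refine Finset.sum_nonneg fun p _ => ?_
  split_ifs
  · exact mul_nonneg
      (pathWeight_nonneg _ (fun _ _ _ => mul_nonneg (hdyn _ _ _ _) (hstrat _ _ _ _ _)) p)
      (mul_nonneg (hdyn _ _ _ _) (hstrat _ _ _ _ _))
  · exact le_rfl

theorem condStrat_valid (hdyn : ∀ k p x y, 0 ≤ dynKernel init inobs trans obs k p x y)
    {g1 : Strat1 X U1 U2 Y} (hg1 : valid1 g1) (t : ℕ) (x : X) (ys : Fin (t + 1) → Y)
    (u2s : Fin t → U2) :
    (∀ u, 0 ≤ condStrat init inobs trans obs g1 t x ys u2s u) ∧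
      ∑ u, condStrat init inobs trans obs g1 t x ys u2s u = 1 := by
  have : Nonempty U1 := Finset.univ_nonempty_iff.1 <| Finset.nonempty_of_sum_ne_zero <|
    ((hg1 0 (fun _ => x) (fun _ => ys 0) Fin.elim0 Fin.elim0).2).symm ▸ one_ne_zero
  exact ⟨normalizedWeight_nonneg (jointWeight_nonneg hdyn hg1 t ys u2s x),
    sum_normalizedWeight _⟩

theorem jointWeight_condStrat (hdyn : ∀ k p x y, 0 ≤ dynKernel init inobs trans obs k p x y)
    {g1 : Strat1 X U1 U2 Y} (hg1 : valid1 g1) (t : ℕ) :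
    jointWeight init inobs trans obs (embed1 (condStrat init inobs trans obs g1)) t =
      jointWeight init inobs trans obs g1 t := by
  have of_stateWeight_eq : ∀ t ys u2s x,
      stateWeight init inobs trans obs (embed1 (condStrat init inobs trans obs g1)) t ys u2s x =
        stateWeight init inobs trans obs g1 t ys u2s x →
      jointWeight init inobs trans obs (embed1 (condStrat init inobs trans obs g1)) t ys u2s x =
        jointWeight init inobs trans obs g1 t ys u2s x := by
    intro t ys u2s x hstate
    funext u
    rw [jointWeight_embed1, hstate, ← sum_jointWeight hg1]
    exact normalizedWeight_mul_sum (jointWeight_nonneg hdyn hg1 t ys u2s x) u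
  induction t with
  | zero =>
    funext ys u2s x
    exact of_stateWeight_eq 0 ys u2s x (by rw [stateWeight_zero, stateWeight_zero])
  | succ k ih =>
    funext ys u2s x
    exact of_stateWeight_eq (k + 1) ys u2s x (by rw [stateWeight_succ, stateWeight_succ, ih])

end JointWeight

section Marginal

variable {X U1 U2 Y : Type*} [Fintype X] [Fintype U1] [Fintype U2] [Fintype Y]
  {init : X → ℝ} {inobs : X → Y → ℝ}
  {trans : X → U1 → U2 → X → ℝ} {obs : X → U1 → U2 → Y → ℝ}

theorem sum_kernel1_mul_stratKernel2
    (hdyn : ∀ k p, ∑ x, ∑ y, dynKernel init inobs trans obs k p x y = 1)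
    {g1 : Strat1 X U1 U2 Y} (hg1 : valid1 g1)
    {g2 : Strat2 U2 Y} (hg2 : valid2 g2) (k : ℕ) (p : Fin k → X × U1 × U2 × Y) :
    ∑ e, kernel1 init inobs trans obs g1 k p e * stratKernel2 g2 k ((·.2.2) ∘ p) e.2.2
      = 1 := by
  simp only [kernel1, Fintype.sum_prod_type]
  refine (Finset.sum_congr rfl fun x _ => ?_).trans (hdyn k p)
  calc _ = ∑ u, ∑ y, ∑ v, dynKernel init inobs trans obs k p x y *
          stratKernel1 g1 k p x u y * stratKernel2 g2 k ((·.2.2) ∘ p) (v, y) :=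
        Finset.sum_congr rfl fun u _ => Finset.sum_comm
    _ = ∑ y, ∑ u, ∑ v, dynKernel init inobs trans obs k p x y *
          stratKernel1 g1 k p x u y * stratKernel2 g2 k ((·.2.2) ∘ p) (v, y) :=
        Finset.sum_comm
    _ = _ := Finset.sum_congr rfl fun y _ => by
        simp only [← Finset.mul_sum, stratKernel2, (hg2 _ _ _).2, mul_one, stratKernel1,
          (hg1 _ _ _ _ _).2]

variable [DecidableEq X] [DecidableEq U1] [DecidableEq U2] [DecidableEq Y]

theorem sum_ite_dens_eq (hdyn : ∀ k p, ∑ x, ∑ y, dynKernel init inobs trans obs k p x y = 1)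
    {g1 : Strat1 X U1 U2 Y} (hg1 : valid1 g1) {g2 : Strat2 U2 Y} (hg2 : valid2 g2) {T : ℕ}
    (t : Fin T) (xt : X) (u1t : U1) (u2t : U2) (yh : Fin (t.1 + 1) → Y) (u2h : Fin t.1 → U2) :
    (∑ ω : Fin T → X × U1 × U2 × Y,
      if (ω t).1 = xt ∧ (ω t).2.1 = u1t ∧ (ω t).2.2.1 = u2t ∧
          ypre ω t = yh ∧ u2pre ω t = u2h then
        dens init inobs trans obs g1 g2 ω else 0) =
      pathWeight (stratKernel2 g2)
          (Fin.snoc (fun i => (u2h i, Fin.init yh i)) (u2t, yh (Fin.last t)) : Fin (t + 1) → _) *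
        jointWeight init inobs trans obs g1 t yh u2h xt u1t := by
  let f : (Fin (t + 1) → X × U1 × U2 × Y) → ℝ := fun σ =>
    if (σ (Fin.last t)).1 = xt ∧ (σ (Fin.last t)).2.1 = u1t ∧ (σ (Fin.last t)).2.2.1 = u2t ∧
        ypre σ (Fin.last t) = yh ∧ u2pre σ (Fin.last t) = u2h then 1 else 0
  have hf : ∀ p e, f (Fin.snoc p e) = if e = (xt, u1t, u2t, yh (Fin.last t)) then
      if (·.2.2.2) ∘ p = Fin.init yh ∧ (·.2.2.1) ∘ p = u2h then 1 else 0 else 0 := by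
    intro p e
    rw [← ite_and]
    refine if_congr ?_ rfl rfl
    rw [Fin.snoc_last, ypre_snoc_last, u2pre_snoc_last, Fin.snoc_eq_iff]
    simp only [Prod.ext_iff]
    tauto
  simp only [dens_eq_pathWeight]
  calc _ = ∑ ω : Fin T → X × U1 × U2 × Y, f (Fin.take (t + 1) t.isLt ω) *
        pathWeight (fun k p e => kernel1 init inobs trans obs g1 k p e *
          stratKernel2 g2 k ((·.2.2) ∘ p) e.2.2) ω :=
        Finset.sum_congr rfl fun ω _ => by simp only [f, ite_mul, one_mul, zero_mul]; rfl
    _ = ∑ σ : Fin (t + 1) → X × U1 × U2 × Y, f σ *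
        pathWeight (fun k p e => kernel1 init inobs trans obs g1 k p e *
          stratKernel2 g2 k ((·.2.2) ∘ p) e.2.2) σ :=
        sum_mul_pathWeight_take _ (sum_kernel1_mul_stratKernel2 hdyn hg1 hg2) _ _
    _ = _ := by
      rw [Fintype.sum_pi_fin_succ, jointWeight, Finset.mul_sum]
      refine Finset.sum_congr rfl fun p _ => ?_
      simp only [hf, ite_mul, zero_mul, Finset.sum_ite_eq', Finset.mem_univ, if_true]
      split_ifs with hp
      · rw [one_mul, pathWeight_mul,
          pathWeight_comp (stratKernel2 g2) (fun e : X × U1 × U2 × Y => e.2.2), Fin.comp_snoc,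
          pathWeight_snoc]
        have hview : (·.2.2) ∘ p = fun i => (u2h i, Fin.init yh i) :=
          funext fun i => Prod.ext (congrFun hp.2 i) (congrFun hp.1 i)
        rw [hview, kernel1]
        ring
      · rw [mul_zero]

theorem sum_ite_dens_embed1_condStrat
    (hdyn : ∀ k p x y, 0 ≤ dynKernel init inobs trans obs k p x y)
    (hdynSum : ∀ k p, ∑ x, ∑ y, dynKernel init inobs trans obs k p x y = 1)
    {g1 : Strat1 X U1 U2 Y} (hg1 : valid1 g1) {g2 : Strat2 U2 Y} (hg2 : valid2 g2) {T : ℕ}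
    (t : Fin T) (xt : X) (u1t : U1) (u2t : U2) (yh : Fin (t.1 + 1) → Y) (u2h : Fin t.1 → U2) :
    (∑ ω : Fin T → X × U1 × U2 × Y,
      if (ω t).1 = xt ∧ (ω t).2.1 = u1t ∧ (ω t).2.2.1 = u2t ∧
          ypre ω t = yh ∧ u2pre ω t = u2h then
        dens init inobs trans obs g1 g2 ω else 0) =
      ∑ ω : Fin T → X × U1 × U2 × Y,
        if (ω t).1 = xt ∧ (ω t).2.1 = u1t ∧ (ω t).2.2.1 = u2t ∧
            ypre ω t = yh ∧ u2pre ω t = u2h then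
          dens init inobs trans obs (embed1 (condStrat init inobs trans obs g1)) g2 ω
        else 0 := by
  rw [sum_ite_dens_eq hdynSum hg1 hg2,
    sum_ite_dens_eq hdynSum (valid1_embed1 (condStrat_valid hdyn hg1)) hg2,
    jointWeight_condStrat hdyn hg1]

end Marginal

/-- Lemma 6 of the paper: in the game where player 1 has complete information
and player 2 observes only `I^2_t = (Y^2_{0:t}, U^2_{0:t-1})`, for any
behavioral strategy `g1` of player 1 there is a behavioral strategy `ḡ1`
depending at each time only on `(X_t, I^2_t)` such that for every valid
strategy `g2` of player 2, the joint distribution of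
`(X_t, U^1_t, U^2_t, I^2_t)` is the same at every time under `(g1, g2)` and
`(ḡ1, g2)`; consequently the expected total cost is the same for every stage
cost function. -/
theorem stmt_16 {X U1 U2 Y : Type*}
    [Fintype X] [Fintype U1] [Fintype U2] [Fintype Y]
    [DecidableEq X] [DecidableEq U1] [DecidableEq U2] [DecidableEq Y]
    {T : ℕ}
    (init : X → ℝ) (inobs : X → Y → ℝ)
    (trans : X → U1 → U2 → X → ℝ) (obs : X → U1 → U2 → Y → ℝ)
    (hinit : (∀ x, 0 ≤ init x) ∧ ∑ x, init x = 1)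
    (hinobs : ∀ x, (∀ y, 0 ≤ inobs x y) ∧ ∑ y, inobs x y = 1)
    (htrans : ∀ x u1 u2, (∀ x', 0 ≤ trans x u1 u2 x') ∧
      ∑ x', trans x u1 u2 x' = 1)
    (hobs : ∀ x u1 u2, (∀ y, 0 ≤ obs x u1 u2 y) ∧ ∑ y, obs x u1 u2 y = 1)
    (g1 : Strat1 X U1 U2 Y) (hg1 : valid1 g1) :
    ∃ gbar : (t : ℕ) → X → (Fin (t + 1) → Y) → (Fin t → U2) → U1 → ℝ,
      (∀ t x ys u2s, (∀ u, 0 ≤ gbar t x ys u2s u) ∧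
        ∑ u, gbar t x ys u2s u = 1) ∧
      (∀ g2 : Strat2 U2 Y, valid2 g2 →
        ∀ t : Fin T, ∀ (xt : X) (u1t : U1) (u2t : U2)
          (yh : Fin (t.1 + 1) → Y) (u2h : Fin t.1 → U2),
          (∑ ω : Fin T → X × U1 × U2 × Y,
            if (ω t).1 = xt ∧ (ω t).2.1 = u1t ∧ (ω t).2.2.1 = u2t ∧
                ypre ω t = yh ∧ u2pre ω t = u2h then
              dens init inobs trans obs g1 g2 ω else 0) =
          ∑ ω : Fin T → X × U1 × U2 × Y,
            if (ω t).1 = xt ∧ (ω t).2.1 = u1t ∧ (ω t).2.2.1 = u2t ∧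
                ypre ω t = yh ∧ u2pre ω t = u2h then
              dens init inobs trans obs (embed1 gbar) g2 ω else 0) ∧
      (∀ g2 : Strat2 U2 Y, valid2 g2 →
        ∀ cst : Fin T → X → U1 → U2 → ℝ,
          (∑ ω : Fin T → X × U1 × U2 × Y,
            dens init inobs trans obs g1 g2 ω *
              ∑ t, cst t (ω t).1 (ω t).2.1 (ω t).2.2.1) =
          ∑ ω : Fin T → X × U1 × U2 × Y,
            dens init inobs trans obs (embed1 gbar) g2 ω *
              ∑ t, cst t (ω t).1 (ω t).2.1 (ω t).2.2.1) := by
  have hdyn : ∀ k p x y, 0 ≤ dynKernel init inobs trans obs k p x y :=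
    dynKernel_nonneg hinit.1 (fun x => (hinobs x).1) (fun x u1 u2 => (htrans x u1 u2).1)
      (fun x u1 u2 => (hobs x u1 u2).1)
  have hdynSum : ∀ k p, ∑ x, ∑ y, dynKernel init inobs trans obs k p x y = 1 :=
    sum_dynKernel hinit.2 (fun x => (hinobs x).2) (fun x u1 u2 => (htrans x u1 u2).2)
      (fun x u1 u2 => (hobs x u1 u2).2)
  have hmarg := fun g2 (hg2 : valid2 g2) =>
    sum_ite_dens_embed1_condStrat (T := T) hdyn hdynSum hg1 hg2
  refine ⟨condStrat init inobs trans obs g1, condStrat_valid hdyn hg1, hmarg,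
    fun g2 hg2 cst => ?_⟩
  simp only [Finset.mul_sum]
  rw [Finset.sum_comm]
  conv_rhs => rw [Finset.sum_comm]
  set_option synthInstance.maxSize 256 in
  refine Finset.sum_congr rfl fun t _ => sum_mul_comp_eq_of_sum_fiber_eq
    (fun ω : Fin T → X × U1 × U2 × Y => ((ω t).1, (ω t).2.1, (ω t).2.2.1, ypre ω t, u2pre ω t))
    (fun b => ?_) (fun b => cst t b.1 b.2.1 b.2.2.1)
  simp only [Prod.ext_iff]
  exact hmarg g2 hg2 t b.1 b.2.1 b.2.2.1 b.2.2.2.1 b.2.2.2.2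
end

section
/- In the one-sided information game where player 2 has no private information (P^2_t = ∅) and common information is I^2_t, the Bayes update of the common-information belief does not depend on player 2's prescription: P^j_t(π, γ1, γ2)(z, x') factorizes as γ2(u^2) · Q_t(π, γ1, z)(x') where z = (y^2, u^2), and hence the posterior F_t(π, γ1, γ2, z) = Q_t(π, γ1, z)/R_t(π, γ1, z) (with R_t the total mass of Q_t) whenever R_t(π, γ1, z) > 0, independent of γ2. -/
/-- `Q_t(π,γ1,z)(x') = Σ_{x,u1} π(x) γ1(x)(u1) P(x', y | x, u1, u2)` where
`z = (y, u2)`. -/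
def Qd {X X' U1 U2 Y : Type*} [Fintype X] [Fintype U1]
    (P : X' → Y → X → U1 → U2 → ℝ)
    (π : X → ℝ) (γ1 : X → U1 → ℝ) (y : Y) (u2 : U2) (x' : X') : ℝ :=
  ∑ x, ∑ u1, π x * γ1 x u1 * P x' y x u1 u2

/-- `R_t(π,γ1,z) = Σ_{x'} Q_t(π,γ1,z)(x')`. -/
def Rd {X X' U1 U2 Y : Type*} [Fintype X] [Fintype X'] [Fintype U1]
    (P : X' → Y → X → U1 → U2 → ℝ)
    (π : X → ℝ) (γ1 : X → U1 → ℝ) (y : Y) (u2 : U2) : ℝ :=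
  ∑ x', Qd P π γ1 y u2 x'

/-- In the one-sided information game (player 2 has no private information),
the joint Bayes kernel factorizes as
`P^j(π,γ1,γ2)(z,x') = γ2(u²) · Q_t(π,γ1,z)(x')` for `z = (y, u²)`, and hence
the posterior `P^j/P^m` equals `Q_t/R_t`, independent of player 2's
prescription `γ2`. -/
theorem stmt_17 {X X' U1 U2 Y : Type*}
    [Fintype X] [Fintype X'] [Fintype U1] [Fintype U2] [DecidableEq U2]
    (P : X' → Y → X → U1 → U2 → ℝ)
    (π : X → ℝ) (hπ : (∀ x, 0 ≤ π x) ∧ ∑ x, π x = 1)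
    (γ1 : X → U1 → ℝ) (hγ1 : ∀ x, (∀ u, 0 ≤ γ1 x u) ∧ ∑ u, γ1 x u = 1)
    (γ2 : U2 → ℝ) (hγ2 : (∀ u, 0 ≤ γ2 u) ∧ ∑ u, γ2 u = 1) :
    (∀ (y : Y) (u2 : U2) (x' : X'),
      (∑ x, ∑ u1, ∑ u2', π x * γ1 x u1 * γ2 u2' *
          (if u2' = u2 then P x' y x u1 u2' else 0)) =
        γ2 u2 * Qd P π γ1 y u2 x') ∧
    (∀ (y : Y) (u2 : U2), 0 < Rd P π γ1 y u2 → 0 < γ2 u2 →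
      ∀ x' : X',
        (γ2 u2 * Qd P π γ1 y u2 x') / (γ2 u2 * Rd P π γ1 y u2) =
          Qd P π γ1 y u2 x' / Rd P π γ1 y u2) := by
  constructor
  · intro y u2 x'
    simp only [Qd, Finset.mul_sum, mul_ite, mul_zero, Finset.sum_ite_eq', Finset.mem_univ,
      if_true]
    exact Finset.sum_congr rfl fun x _ => Finset.sum_congr rfl fun u1 _ => by ring
  · intro y u2 _ hg2 x'
    rw [mul_div_mul_left _ _ hg2.ne']
end
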